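/- arXiv:1508.00719 — 7 statements merged into one kernel-verified Lean document; each statement's English description precedes it below -/
import Mathlib

section
/- Let f be a Laurent polynomial in m variables over ℝ all of whose coefficients are nonnegative, and let r ≥ 1 be an integer. Suppose that the constant term Const(f^{rn}) is nonzero for all but finitely many n ∈ ℕ. Then the limit lim_{n→∞} (Const(f^{rn}))^{1/(rn)} exists (as a real number). -/
open Filter

open Filter Topology

variable {G : Type*} [AddCommGroup G]

lemma mul_coeff_nonneg (g h : AddMonoidAlgebra ℝ G)
    (hg : ∀ d, 0 ≤ g.coeff d) (hh : ∀ d, 0 ≤ h.coeff d) (x : G) : 0 ≤ (g * h).coeff x := by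
  classical
  rw [AddMonoidAlgebra.mul_apply, Finsupp.sum]
  refine Finset.sum_nonneg fun a₁ _ => ?_
  rw [Finsupp.sum]
  refine Finset.sum_nonneg fun a₂ _ => ?_
  split
  · exact mul_nonneg (hg a₁) (hh a₂)
  · exact le_rfl

lemma mul_coeff_zero_ge (g h : AddMonoidAlgebra ℝ G)
    (hg : ∀ d, 0 ≤ g.coeff d) (hh : ∀ d, 0 ≤ h.coeff d) : g.coeff 0 * h.coeff 0 ≤ (g * h).coeff 0 := by
  classical
  rcases eq_or_lt_of_le (hg 0) with h0 | h0
  · rw [← h0, zero_mul]; exact mul_coeff_nonneg g h hg hh 0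
  rcases eq_or_lt_of_le (hh 0) with h1 | h1
  · rw [← h1, mul_zero]; exact mul_coeff_nonneg g h hg hh 0
  rw [AddMonoidAlgebra.mul_apply, Finsupp.sum]
  have hg0 : (0 : G) ∈ g.coeff.support := Finsupp.mem_support_iff.2 (ne_of_gt h0)
  have hh0 : (0 : G) ∈ h.coeff.support := Finsupp.mem_support_iff.2 (ne_of_gt h1)
  calc g.coeff 0 * h.coeff 0 = if (0 : G) + 0 = 0 then g.coeff 0 * h.coeff 0 else 0 := by simp
    _ ≤ h.coeff.sum fun a₂ b₂ => if (0 : G) + a₂ = 0 then g.coeff 0 * b₂ else 0 := by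
        rw [Finsupp.sum]
        refine Finset.single_le_sum (f := fun a₂ => if (0:G) + a₂ = 0 then g.coeff 0 * h.coeff a₂ else 0) (fun a₂ _ => ?_) hh0
        split
        · exact mul_nonneg (hg 0) (hh a₂)
        · exact le_rfl
    _ ≤ _ := by
        refine Finset.single_le_sum (f := fun a₁ => h.coeff.sum fun a₂ b₂ => if a₁ + a₂ = 0 then g.coeff a₁ * b₂ else 0) (fun a₁ _ => ?_) hg0
        rw [Finsupp.sum]
        refine Finset.sum_nonneg fun a₂ _ => ?_
        split
        · exact mul_nonneg (hg a₁) (hh a₂)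
        · exact le_rfl

variable {G : Type*} [AddCommGroup G]

noncomputable def totalSum : AddMonoidAlgebra ℝ G →ₐ[ℝ] ℝ :=
  AddMonoidAlgebra.lift ℝ ℝ G 1

lemma totalSum_apply (g : AddMonoidAlgebra ℝ G) : totalSum g = g.coeff.sum fun _ b => b := by
  rw [totalSum, AddMonoidAlgebra.lift_apply]
  simp

lemma coeff_zero_le_totalSum (g : AddMonoidAlgebra ℝ G) (hg : ∀ d, 0 ≤ g.coeff d) :
    g.coeff 0 ≤ totalSum g := by
  classical
  rw [totalSum_apply, Finsupp.sum]
  rcases eq_or_ne (g.coeff 0) 0 with h | h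
  · rw [h]; exact Finset.sum_nonneg fun a _ => hg a
  · exact Finset.single_le_sum (f := fun a => g.coeff a) (fun a _ => hg a) (Finsupp.mem_support_iff.2 h)

lemma totalSum_pow (g : AddMonoidAlgebra ℝ G) (k : ℕ) : totalSum (g ^ k) = (totalSum g) ^ k :=
  map_pow _ _ _

lemma fekete {u : ℕ → ℝ} {N : ℕ} (hN : 1 ≤ N)
    (hsup : ∀ p q, N ≤ p → N ≤ q → u p + u q ≤ u (p + q))
    {C : ℝ} (hub : ∀ n, N ≤ n → u n / n ≤ C) :
    ∃ L, Tendsto (fun n : ℕ => u n / n) atTop (𝓝 L) := by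
  set T : Set ℝ := {x | ∃ n, N ≤ n ∧ u n / n = x} with hT
  have hTne : T.Nonempty := ⟨u N / N, N, le_rfl, rfl⟩
  have hTbdd : BddAbove T := ⟨C, fun x ⟨n, hn, hx⟩ => hx ▸ hub n hn⟩
  set L := sSup T with hL
  have hle : ∀ n, N ≤ n → u n / n ≤ L := fun n hn => le_csSup hTbdd ⟨n, hn, rfl⟩
  refine ⟨L, Metric.tendsto_nhds.2 fun ε hε => ?_⟩
  obtain ⟨x, ⟨k, hk, rfl⟩, hkx⟩ :=
    exists_lt_of_lt_csSup hTne (show L - ε/2 < L by linarith)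
  have hk0 : 0 < k := lt_of_lt_of_le hN hk
  have hIne : (Finset.Ico N (N + k)).Nonempty := by
    rw [Finset.nonempty_Ico]; omega
  set B := (Finset.Ico N (N + k)).inf' hIne u with hB
  have hBle : ∀ s, N ≤ s → s < N + k → B ≤ u s := fun s h1 h2 =>
    Finset.inf'_le u (Finset.mem_Ico.2 ⟨h1, h2⟩)
  have key : ∀ (q : ℕ) (s : ℕ), N ≤ s → (q : ℝ) * u k + u s ≤ u (q * k + s) := by
    intro q
    induction q with
    | zero => intro s _; simp
    | succ q ih =>
      intro s hs
      have h2 : N ≤ q * k + s := by omega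
      have h1 : u k + u (q * k + s) ≤ u (k + (q * k + s)) := hsup _ _ hk h2
      have h3 : (q + 1) * k + s = k + (q * k + s) := by ring
      calc ((q + 1 : ℕ) : ℝ) * u k + u s = u k + ((q : ℝ) * u k + u s) := by push_cast; ring
        _ ≤ u k + u (q * k + s) := by linarith [ih s hs]
        _ ≤ u (k + (q * k + s)) := h1
        _ = u ((q + 1) * k + s) := by rw [h3]
  set q : ℕ → ℕ := fun n => (n - N) / k with hq
  set s : ℕ → ℕ := fun n => N + (n - N) % k with hs
  have hqs : ∀ n, N ≤ n → q n * k + s n = n := by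
    intro n hn
    have h := Nat.div_add_mod (n - N) k
    simp only [hq, hs]
    rw [mul_comm ((n - N) / k) k]
    omega
  have hs1 : ∀ n, N ≤ s n := fun n => Nat.le_add_right _ _
  have hs2 : ∀ n, s n < N + k := fun n => by
    have := Nat.mod_lt (n - N) hk0
    simp only [hs]; omega
  -- lower bound function
  set g : ℕ → ℝ := fun n => ((q n : ℝ) * u k + B) / n with hg
  have hgl : ∀ n, N ≤ n → g n ≤ u n / n := by
    intro n hn
    have hn0 : (0 : ℝ) < n := by
      have : 0 < n := lt_of_lt_of_le hN hn
      exact_mod_cast this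
    rw [hg]
    refine div_le_div_of_nonneg_right ?_ (le_of_lt hn0)
    calc (q n : ℝ) * u k + B ≤ (q n : ℝ) * u k + u (s n) := by
          linarith [hBle (s n) (hs1 n) (hs2 n)]
      _ ≤ u (q n * k + s n) := key (q n) (s n) (hs1 n)
      _ = u n := by rw [hqs n hn]
  -- tendsto of g to u k / k
  have hk0' : (0 : ℝ) < k := by exact_mod_cast hk0
  set e : ℕ → ℝ := fun n => (s n : ℝ) / n with he
  have helim : Tendsto e atTop (𝓝 0) := by
    have h1 : Tendsto (fun n : ℕ => ((N + k : ℕ) : ℝ) * (1 / n)) atTop (𝓝 (((N + k : ℕ) : ℝ) * 0)) :=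
      tendsto_const_nhds.mul tendsto_one_div_atTop_nhds_zero_nat
    rw [mul_zero] at h1
    refine tendsto_of_tendsto_of_tendsto_of_le_of_le' tendsto_const_nhds h1 ?_ ?_
    · exact Eventually.of_forall fun n => by positivity
    · refine Eventually.of_forall fun n => ?_
      have h2 : (s n : ℝ) ≤ ((N + k : ℕ) : ℝ) := by
        exact_mod_cast le_of_lt (hs2 n)
      calc e n = (s n : ℝ) / n := rfl
        _ ≤ ((N + k : ℕ) : ℝ) / n := by gcongr
        _ = ((N + k : ℕ) : ℝ) * (1 / n) := by rw [mul_one_div]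
  have hgeq : ∀ᶠ n in atTop, (1 - e n) * (u k / k) + B * (1 / n) = g n := by
    filter_upwards [eventually_ge_atTop N] with n hn
    have hn0 : (n : ℝ) ≠ 0 := by
      have : 0 < n := lt_of_lt_of_le hN hn
      positivity
    have hqk : (q n : ℝ) * k = (n : ℝ) - s n := by
      have h5 : ((q n * k + s n : ℕ) : ℝ) = ((n : ℕ) : ℝ) := by rw [hqs n hn]
      push_cast at h5
      linarith
    have hk0'' : (k : ℝ) ≠ 0 := by positivity
    have hqn : (q n : ℝ) = ((n : ℝ) - s n) / k := by
      rw [eq_div_iff hk0'']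
      exact hqk
    show (1 - (s n : ℝ) / n) * (u k / k) + B * (1 / n) = ((q n : ℝ) * u k + B) / n
    rw [hqn]
    field_simp
  have hglim : Tendsto g atTop (𝓝 (u k / k)) := by
    have h1 : Tendsto (fun n : ℕ => (1 - e n) * (u k / k) + B * (1 / n)) atTop
        (𝓝 ((1 - 0) * (u k / k) + B * 0)) :=
      ((tendsto_const_nhds.sub helim).mul tendsto_const_nhds).add
        (tendsto_const_nhds.mul tendsto_one_div_atTop_nhds_zero_nat)
    rw [show (1 - 0 : ℝ) * (u k / k) + B * 0 = u k / k by ring] at h1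
    exact h1.congr' hgeq
  have hev : ∀ᶠ n in atTop, L - ε < g n :=
    hglim.eventually (eventually_gt_nhds (by linarith : L - ε < u k / k))
  filter_upwards [hev, eventually_ge_atTop N] with n h1 h2
  rw [Real.dist_eq, abs_sub_lt_iff]
  have h3 := hgl n h2
  have h4 := hle n h2
  constructor <;> linarith

/-- Let `f` be a Laurent polynomial in `m` variables over `ℝ` with nonnegative
coefficients and `r ≥ 1` an integer such that the constant term of `f^(r·n)` is
nonzero for all but finitely many `n`. Then `lim_{n→∞} Const(f^{rn})^{1/(rn)}`
exists. -/
theorem exists_lim_const_pow (m : ℕ) (f : AddMonoidAlgebra ℝ (Fin m → ℤ))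
    (hf : ∀ d : Fin m → ℤ, 0 ≤ f.coeff d) (r : ℕ) (hr : 1 ≤ r)
    (hne : ∀ᶠ n : ℕ in atTop, (f ^ (r * n)).coeff 0 ≠ 0) :
    ∃ L : ℝ, Tendsto (fun n : ℕ => ((f ^ (r * n)).coeff 0) ^ (1 / (r * n : ℝ)))
      atTop (nhds L) := by
  classical
  -- all powers have nonnegative coefficients
  have hpow : ∀ k : ℕ, ∀ d, 0 ≤ (f ^ k).coeff d := by
    intro k
    induction k with
    | zero =>
      intro d
      rw [pow_zero]
      rw [AddMonoidAlgebra.one_def, AddMonoidAlgebra.coeff_single]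
      rcases eq_or_ne d 0 with h | h
      · rw [h, Finsupp.single_eq_same]; exact zero_le_one
      · rw [Finsupp.single_eq_of_ne h]
    | succ k ih =>
      rw [pow_succ]
      exact mul_coeff_nonneg _ _ ih hf
  set a : ℕ → ℝ := fun n => (f ^ (r * n)).coeff 0 with ha
  have ha_nonneg : ∀ n, 0 ≤ a n := fun n => hpow _ 0
  have hmul : ∀ p q : ℕ, a p * a q ≤ a (p + q) := by
    intro p q
    have h1 : f ^ (r * (p + q)) = f ^ (r * p) * f ^ (r * q) := by
      rw [← pow_add, Nat.mul_add]
    show a p * a q ≤ (f ^ (r * (p + q))).coeff 0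
    rw [h1]
    exact mul_coeff_zero_ge _ _ (hpow _) (hpow _)
  obtain ⟨n₀, hn₀⟩ := eventually_atTop.1 hne
  set N := max n₀ 1 with hN
  have hN1 : 1 ≤ N := le_max_right _ _
  have ha_pos : ∀ n, N ≤ n → 0 < a n := by
    intro n hn
    exact lt_of_le_of_ne (ha_nonneg n) (Ne.symm (hn₀ n (le_trans (le_max_left _ _) hn)))
  -- upper bound via total sum
  set s : ℝ := totalSum f with hsdef
  have hconst_le : ∀ k : ℕ, (f ^ k).coeff 0 ≤ s ^ k := by
    intro k
    calc (f ^ k).coeff 0 ≤ totalSum (f ^ k) := coeff_zero_le_totalSum _ (hpow k)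
      _ = s ^ k := map_pow _ _ _
  have hs_nonneg : 0 ≤ s := by
    rw [hsdef, totalSum_apply, Finsupp.sum]
    exact Finset.sum_nonneg fun d _ => hf d
  have hs_pos : 0 < s := by
    rcases eq_or_lt_of_le hs_nonneg with h | h
    · exfalso
      have h1 : 0 < a N := ha_pos N le_rfl
      have h2 : a N ≤ s ^ (r * N) := hconst_le (r * N)
      have h3 : r * N ≠ 0 := by positivity
      rw [← h, zero_pow h3] at h2
      linarith
    · exact h
  -- apply Fekete to the logs
  set u : ℕ → ℝ := fun n => Real.log (a n) with hu
  have hsup : ∀ p q, N ≤ p → N ≤ q → u p + u q ≤ u (p + q) := by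
    intro p q hp hq
    have h1 : 0 < a p := ha_pos p hp
    have h2 : 0 < a q := ha_pos q hq
    show Real.log (a p) + Real.log (a q) ≤ Real.log (a (p + q))
    rw [← Real.log_mul (ne_of_gt h1) (ne_of_gt h2)]
    exact Real.log_le_log (by positivity) (hmul p q)
  have hub : ∀ n, N ≤ n → u n / n ≤ (r : ℝ) * Real.log s := by
    intro n hn
    have hn0 : (0 : ℝ) < n := by
      have : 0 < n := lt_of_lt_of_le hN1 hn
      exact_mod_cast this
    have h1 : u n ≤ ((r * n : ℕ) : ℝ) * Real.log s := by
      show Real.log (a n) ≤ _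
      rw [← Real.log_pow]
      exact Real.log_le_log (ha_pos n hn) (hconst_le (r * n))
    rw [div_le_iff₀ hn0]
    push_cast at h1 ⊢
    calc u n ≤ (r : ℝ) * n * Real.log s := h1
      _ = (r : ℝ) * Real.log s * n := by ring
  obtain ⟨L₀, hL₀⟩ := fekete hN1 hsup hub
  -- conclude
  refine ⟨Real.exp (L₀ * (1 / (r : ℝ))), ?_⟩
  have hr0 : (0 : ℝ) < r := by exact_mod_cast hr
  have hlim2 : Tendsto (fun n : ℕ => Real.exp ((u n / n) * (1 / (r : ℝ)))) atTop
      (𝓝 (Real.exp (L₀ * (1 / (r : ℝ))))) :=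
    (Real.continuous_exp.continuousAt.tendsto).comp (hL₀.mul tendsto_const_nhds)
  refine hlim2.congr' ?_
  filter_upwards [eventually_ge_atTop N] with n hn
  have hn0 : (0 : ℝ) < n := by
    have : 0 < n := lt_of_lt_of_le hN1 hn
    exact_mod_cast this
  have h1 : 0 < a n := ha_pos n hn
  have h2 : (a n) ^ (1 / (r * n : ℝ)) = Real.exp (Real.log (a n) * (1 / (r * n : ℝ))) :=
    Real.rpow_def_of_pos h1 _
  show Real.exp ((u n / n) * (1 / (r : ℝ))) = (a n) ^ (1 / (r * n : ℝ))
  rw [h2, Real.exp_eq_exp]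
  show Real.log (a n) / n * (1 / (r : ℝ)) = Real.log (a n) * (1 / ((r : ℝ) * n))
  rw [mul_one_div, mul_one_div, div_div, mul_comm (n : ℝ) (r : ℝ)]
end

section
/- Let b_1, …, b_m ∈ ℝ^n be vectors such that 0 lies in the interior of the convex hull of {b_1, …, b_m}. Then there exist a positive integer k and ε > 0 such that ∑_{i=1}^m exp(⟨b_i, u⟩) ≥ ε · ∑_{j=1}^n ( exp(u_j/k) + exp(−u_j/k) ) for all u ∈ ℝ^n. -/
set_option maxHeartbeats 1000000 in
private lemma exp_inner_le_sum {n m : ℕ} (b : Fin m → (Fin n → ℝ)) (hm : 0 < m)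
    (v : Fin n → ℝ) (hv : v ∈ convexHull ℝ (Set.range b)) (u : Fin n → ℝ) :
    Real.exp (∑ j, v j * u j) ≤ ∑ i, Real.exp (∑ j, b i j * u j) := by
  haveI : Nonempty (Fin m) := Fin.pos_iff_nonempty.mp hm
  have hne : (Finset.univ : Finset (Fin m)).Nonempty := Finset.univ_nonempty
  set c := Finset.univ.sup' hne (fun i => ∑ j, b i j * u j) with hc
  have hlin : IsLinearMap ℝ (fun w : Fin n → ℝ => ∑ j, w j * u j) := by
    constructor
    · intro x y; simp [add_mul, Finset.sum_add_distrib]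
    · intro r x; simp [Finset.mul_sum, mul_assoc]
  have hsub : convexHull ℝ (Set.range b) ⊆ {w : Fin n → ℝ | ∑ j, w j * u j ≤ c} := by
    apply convexHull_min
    · rintro _ ⟨i, rfl⟩
      exact Finset.le_sup' (fun i => ∑ j, b i j * u j) (Finset.mem_univ i)
    · exact convex_halfSpace_le hlin c
  have hvc : ∑ j, v j * u j ≤ c := hsub hv
  obtain ⟨i₀, -, hi₀⟩ := Finset.exists_mem_eq_sup' hne (fun i => ∑ j, b i j * u j)
  calc Real.exp (∑ j, v j * u j) ≤ Real.exp (∑ j, b i₀ j * u j) := by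
        exact Real.exp_le_exp.mpr (hi₀ ▸ hvc)
    _ ≤ ∑ i, Real.exp (∑ j, b i j * u j) :=
        Finset.single_le_sum (f := fun i => Real.exp (∑ j, b i j * u j))
          (fun i _ => (Real.exp_pos _).le) (Finset.mem_univ i₀)

/-- If `0` lies in the interior of the convex hull of `b₁, …, b_m ∈ ℝⁿ`, then
there exist `k ∈ ℤ_{>0}` and `ε > 0` such that
`∑ᵢ exp⟨bᵢ, u⟩ ≥ ε · ∑ⱼ (exp(uⱼ/k) + exp(−uⱼ/k))` for all `u ∈ ℝⁿ`. -/
theorem sum_exp_inner_ge_proper (n m : ℕ) (b : Fin m → (Fin n → ℝ))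
    (hhull : (0 : Fin n → ℝ) ∈ interior (convexHull ℝ (Set.range b))) :
    ∃ k : ℕ, 0 < k ∧ ∃ ε : ℝ, 0 < ε ∧ ∀ u : Fin n → ℝ,
      ε * ∑ j : Fin n, (Real.exp (u j / k) + Real.exp (-u j / k)) ≤
        ∑ i : Fin m, Real.exp (∑ j : Fin n, b i j * u j) := by
  have hm : 0 < m := by
    rcases Nat.eq_zero_or_pos m with h | h
    · subst h
      simp [Set.range_eq_empty] at hhull
    · exact h
  obtain ⟨δ, hδ, hball⟩ := Metric.mem_nhds_iff.mp (mem_interior_iff_mem_nhds.mp hhull)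
  -- the vectors ±(δ/2) eⱼ lie in the hull
  have hmem : ∀ (j : Fin n) (t : ℝ), |t| ≤ δ / 2 →
      Pi.single j t ∈ convexHull ℝ (Set.range b) := by
    intro j t ht
    apply hball
    rw [Metric.mem_ball, dist_zero_right]
    rcases Nat.eq_zero_or_pos n with hn | hn
    · exact absurd j.pos (by omega)
    · haveI : Nonempty (Fin n) := Fin.pos_iff_nonempty.mp hn
      rw [pi_norm_lt_iff hδ]
      intro i
      rw [Real.norm_eq_abs, Pi.single_apply]
      split
      · linarith
      · simpa using hδ
  -- choose k
  set k : ℕ := ⌈2 / δ⌉₊ + 1 with hk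
  have hk0 : 0 < k := Nat.succ_pos _
  have hkδ : 1 / (k : ℝ) ≤ δ / 2 := by
    rw [div_le_iff₀ (by positivity), ← div_le_iff₀' (by positivity : (0:ℝ) < δ / 2)]
    have : 2 / δ ≤ (⌈2 / δ⌉₊ : ℝ) := Nat.le_ceil _
    have h1 : (1:ℝ) / (δ / 2) = 2 / δ := by field_simp
    rw [hk]
    push_cast
    linarith
  refine ⟨k, hk0, 1 / (4 * (n + 1)), by positivity, fun u => ?_⟩
  set S := ∑ i, Real.exp (∑ j, b i j * u j) with hS
  have hSpos : 0 < S := Finset.sum_pos (fun i _ => Real.exp_pos _)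
    (by haveI : Nonempty (Fin m) := Fin.pos_iff_nonempty.mp hm; exact Finset.univ_nonempty)
  -- for each j, exp(δ/2 * uⱼ) ≤ S and exp(-δ/2 * uⱼ) ≤ S
  have key : ∀ (j : Fin n) (t : ℝ), |t| ≤ δ / 2 → Real.exp (t * u j) ≤ S := by
    intro j t ht
    have := exp_inner_le_sum b hm (Pi.single j t) (hmem j t ht) u
    have hsum : ∑ i, (Pi.single j t : Fin n → ℝ) i * u i = t * u j := by
      rw [Finset.sum_eq_single j]
      · simp
      · intro i _ hij; simp [Pi.single_apply, hij]
      · simp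
    rwa [hsum] at this
  -- each exp(±uⱼ/k) ≤ 2 S
  have hterm : ∀ (j : Fin n) (s : ℝ), |s| ≤ 1 / (k : ℝ) →
      Real.exp (s * u j) ≤ 2 * S := by
    intro j s hs
    have hs' : |s| ≤ δ / 2 := le_trans hs hkδ
    rcases le_or_gt 0 (u j) with hu | hu
    · have h1 : s * u j ≤ (δ / 2) * u j := by
        have := le_of_abs_le hs'
        nlinarith
      calc Real.exp (s * u j) ≤ Real.exp ((δ/2) * u j) := Real.exp_le_exp.mpr h1
        _ ≤ S := key j (δ/2) (by rw [abs_of_nonneg (by linarith)])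
        _ ≤ 2 * S := by linarith
    · have h1 : s * u j ≤ (-(δ / 2)) * u j := by
        have := neg_le_of_abs_le hs'
        nlinarith
      calc Real.exp (s * u j) ≤ Real.exp ((-(δ/2)) * u j) := Real.exp_le_exp.mpr h1
        _ ≤ S := key j (-(δ/2)) (by rw [abs_neg, abs_of_nonneg (by linarith)])
        _ ≤ 2 * S := by linarith
  have hk_ne : (k : ℝ) ≠ 0 := by positivity
  have hbound : ∑ j : Fin n, (Real.exp (u j / k) + Real.exp (-u j / k)) ≤ n * (4 * S) := by
    calc ∑ j : Fin n, (Real.exp (u j / k) + Real.exp (-u j / k))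
        ≤ ∑ j : Fin n, (4 * S) := by
          apply Finset.sum_le_sum
          intro j _
          have h1 : Real.exp (u j / k) ≤ 2 * S := by
            have := hterm j (1 / (k : ℝ)) (by rw [abs_of_nonneg (by positivity)])
            rwa [one_div, inv_mul_eq_div] at this
          have h2 : Real.exp (-u j / k) ≤ 2 * S := by
            have := hterm j (-(1 / (k : ℝ))) (by rw [abs_neg, abs_of_nonneg (by positivity)])
            rwa [neg_mul, one_div, inv_mul_eq_div, ← neg_div] at this
          linarith
      _ = n * (4 * S) := by rw [Finset.sum_const, Finset.card_univ, Fintype.card_fin,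
            nsmul_eq_mul]
  rw [div_mul_eq_mul_div, one_mul, div_le_iff₀ (by positivity)]
  calc ∑ j : Fin n, (Real.exp (u j / k) + Real.exp (-u j / k)) ≤ n * (4 * S) := hbound
    _ ≤ S * (4 * (n + 1)) := by nlinarith
end

section
/- Let b_1, …, b_m ∈ ℝ^n be vectors such that 0 lies in the interior of the convex hull of {b_1, …, b_m}. Then the function g : ℝ^n → ℝ, g(u) = ∑_{k=1}^m exp(⟨b_k, u⟩), attains a global minimum at exactly one point u_con ∈ ℝ^n; that is, there exists a unique u_con with g(u_con) ≤ g(u) for all u ∈ ℝ^n. -/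
open Finset Real

lemma coercive_aux (n m : ℕ) (b : Fin m → (Fin n → ℝ))
    (hhull : (0 : Fin n → ℝ) ∈ interior (convexHull ℝ (Set.range b))) :
    ∃ ε : ℝ, 0 < ε ∧ ∀ u : Fin n → ℝ, ∃ k : Fin m,
      ε * ‖u‖ ≤ ∑ j : Fin n, b k j * u j := by
  have hm : 0 < m := by
    by_contra h
    have : m = 0 := by omega
    subst this
    have : Set.range b = ∅ := by simp [Set.range_eq_empty]
    rw [this] at hhull
    simp at hhull
  haveI : Nonempty (Fin m) := ⟨⟨0, hm⟩⟩
  obtain ⟨δ, hδ, hball⟩ := Metric.isOpen_iff.mp isOpen_interior 0 hhull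
  refine ⟨δ / 2, by positivity, fun u => ?_⟩
  by_cases hu : u = 0
  · obtain ⟨k⟩ := ‹Nonempty (Fin m)›
    exact ⟨k, by simp [hu]⟩
  haveI : Nonempty (Fin n) := by
    by_contra h
    exact hu (funext fun j => absurd ⟨j⟩ h)
  have hnu : (0:ℝ) < ‖u‖ := norm_pos_iff.mpr hu
  set f : (Fin n → ℝ) → ℝ := fun w => ∑ j, w j * u j with hf
  have hflin : IsLinearMap ℝ f := by
    constructor
    · intro x y; simp [hf, add_mul, Finset.sum_add_distrib]
    · intro c x; simp [hf, Finset.mul_sum, mul_assoc]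
  set C : ℝ := Finset.univ.sup' (Finset.univ_nonempty) (fun k => f (b k)) with hC
  have hsub : convexHull ℝ (Set.range b) ⊆ {w | f w ≤ C} := by
    apply convexHull_min
    · rintro w ⟨k, rfl⟩
      exact Finset.le_sup' (fun k => f (b k)) (Finset.mem_univ k)
    · exact convex_halfSpace_le hflin C
  set x : Fin n → ℝ := (δ / 2 / ‖u‖) • u with hx
  have hxball : x ∈ Metric.ball (0 : Fin n → ℝ) δ := by
    simp only [Metric.mem_ball, dist_zero_right, hx, norm_smul, Real.norm_eq_abs]
    rw [abs_of_pos (by positivity), div_mul_cancel₀]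
    · linarith
    · exact ne_of_gt hnu
  have hxC : f x ≤ C := hsub (interior_subset (hball hxball))
  have hfx : f x = (δ / 2 / ‖u‖) * ∑ j, u j * u j := by
    simp [hx, hf, Finset.mul_sum, mul_assoc]
  have hsq : ‖u‖ ^ 2 ≤ ∑ j, u j * u j := by
    obtain ⟨i, hi⟩ := Finset.exists_mem_eq_sup' (Finset.univ_nonempty (α := Fin n))
      (fun j => ‖u j‖₊)
    have hsup : (Finset.univ.sup fun j => ‖u j‖₊) = ‖u i‖₊ := by
      rw [← Finset.sup'_eq_sup Finset.univ_nonempty]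
      exact hi.2
    have hnorm : ‖u‖ = |u i| := by
      rw [Pi.norm_def, hsup, coe_nnnorm, Real.norm_eq_abs]
    rw [hnorm, sq_abs, pow_two]
    exact Finset.single_le_sum (fun j _ => mul_self_nonneg (u j)) (Finset.mem_univ i)
  obtain ⟨k, hk⟩ := Finset.exists_mem_eq_sup' (Finset.univ_nonempty (α := Fin m))
    (fun k => f (b k))
  refine ⟨k, ?_⟩
  have h1 : (δ / 2 / ‖u‖) * ‖u‖ ^ 2 ≤ f x := by
    rw [hfx]
    exact mul_le_mul_of_nonneg_left hsq (by positivity)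
  have h2 : (δ / 2 / ‖u‖) * ‖u‖ ^ 2 = (δ / 2) * ‖u‖ := by
    field_simp
  have : (δ/2) * ‖u‖ ≤ C := by rw [← h2]; exact h1.trans hxC
  calc (δ/2) * ‖u‖ ≤ C := this
    _ = f (b k) := hk.2
    _ = ∑ j : Fin n, b k j * u j := rfl

/-- If `0` lies in the interior of the convex hull of `b₁, …, b_m ∈ ℝⁿ`, then
`g(u) = ∑ₖ exp⟨b_k, u⟩` attains its global minimum at exactly one point
(the conifold point in logarithmic coordinates). -/
theorem existsUnique_global_min_sum_exp_inner (n m : ℕ) (b : Fin m → (Fin n → ℝ))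
    (hhull : (0 : Fin n → ℝ) ∈ interior (convexHull ℝ (Set.range b))) :
    ∃! ucon : Fin n → ℝ, ∀ u : Fin n → ℝ,
      ∑ k : Fin m, Real.exp (∑ j : Fin n, b k j * ucon j) ≤
        ∑ k : Fin m, Real.exp (∑ j : Fin n, b k j * u j) := by
  obtain ⟨ε, hε, hcoer⟩ := coercive_aux n m b hhull
  set g : (Fin n → ℝ) → ℝ := fun u => ∑ k : Fin m, Real.exp (∑ j : Fin n, b k j * u j)
    with hg
  have hgcont : Continuous g := by
    apply continuous_finset_sum
    intro k _
    exact Real.continuous_exp.comp (continuous_finset_sum _ fun j _ =>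
      (continuous_const.mul (continuous_apply j)))
  have hglb : ∀ u, Real.exp (ε * ‖u‖) ≤ g u := by
    intro u
    obtain ⟨k, hk⟩ := hcoer u
    calc Real.exp (ε * ‖u‖) ≤ Real.exp (∑ j, b k j * u j) := Real.exp_le_exp.mpr hk
      _ ≤ g u := Finset.single_le_sum (f := fun k => Real.exp (∑ j, b k j * u j))
          (fun k _ => (Real.exp_pos _).le) (Finset.mem_univ k)
  have hg0 : g 0 = m := by simp [hg]
  -- existence
  set R : ℝ := max (ε⁻¹ * Real.log m) 0 with hR
  have hcpt : IsCompact (Metric.closedBall (0 : Fin n → ℝ) R) :=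
    isCompact_closedBall 0 R
  obtain ⟨u₀, hu₀mem, hu₀⟩ := hcpt.exists_isMinOn
    ⟨0, Metric.mem_closedBall_self (le_max_right _ _)⟩ hgcont.continuousOn
  have hmin : ∀ u, g u₀ ≤ g u := by
    intro u
    by_cases h : u ∈ Metric.closedBall (0 : Fin n → ℝ) R
    · exact hu₀ h
    · have hu : R < ‖u‖ := by
        simpa [Metric.mem_closedBall, dist_zero_right] using h
      have h1 : g u₀ ≤ (m : ℝ) := hg0 ▸ hu₀ (Metric.mem_closedBall_self (le_max_right _ _))
      have h2 : (m : ℝ) ≤ Real.exp (ε * ‖u‖) := by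
        rcases Nat.eq_zero_or_pos m with hm | hm
        · simp [hm]; positivity
        · have : Real.log m ≤ ε * ‖u‖ := by
            have : ε⁻¹ * Real.log m ≤ R := le_max_left _ _
            have h3 : ε⁻¹ * Real.log m ≤ ‖u‖ := this.trans hu.le
            calc Real.log m = ε * (ε⁻¹ * Real.log m) := by field_simp
              _ ≤ ε * ‖u‖ := by nlinarith
          calc (m:ℝ) = Real.exp (Real.log m) := by
                rw [Real.exp_log (by exact_mod_cast hm)]
            _ ≤ Real.exp (ε * ‖u‖) := Real.exp_le_exp.mpr this
      exact h1.trans (h2.trans (hglb u))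
  refine ⟨u₀, hmin, ?_⟩
  -- uniqueness
  intro v hv
  by_contra hne
  have hgeq : g v = g u₀ := le_antisymm (hv u₀) (hmin v)
  set w : Fin n → ℝ := (1/2 : ℝ) • v + (1/2 : ℝ) • u₀ with hw
  set a : Fin m → ℝ := fun k => ∑ j, b k j * v j with ha
  set c : Fin m → ℝ := fun k => ∑ j, b k j * u₀ j with hc
  have hmid : ∀ k, (∑ j, b k j * w j) = (1/2) * a k + (1/2) * c k := by
    intro k
    simp only [hw, ha, hc, Pi.add_apply, Pi.smul_apply, smul_eq_mul, mul_add,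
      Finset.sum_add_distrib, Finset.mul_sum]
    congr 1 <;> exact Finset.sum_congr rfl fun j _ => by ring
  have hd : v - u₀ ≠ 0 := sub_ne_zero.mpr hne
  obtain ⟨k₀, hk₀⟩ := hcoer (v - u₀)
  have hk₀ne : a k₀ ≠ c k₀ := by
    intro h
    have : (∑ j, b k₀ j * (v - u₀) j) = a k₀ - c k₀ := by
      simp [ha, hc, mul_sub, Finset.sum_sub_distrib]
    rw [this, h, sub_self] at hk₀
    have : ‖v - u₀‖ > 0 := norm_pos_iff.mpr hd
    nlinarith
  have hlt : g w < (1/2) * g v + (1/2) * g u₀ := by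
    rw [hg]
    simp only [Finset.mul_sum, ← Finset.sum_add_distrib]
    apply Finset.sum_lt_sum
    · intro k _
      rw [hmid k]
      rcases eq_or_ne (a k) (c k) with h | h
      · rw [h]; rw [show (1/2:ℝ) * c k + (1/2) * c k = c k by ring]
        rw [show (1/2:ℝ) * Real.exp (a k) + (1/2) * Real.exp (c k) = Real.exp (c k) by
          rw [h]; ring]
      · have := strictConvexOn_exp.2 (Set.mem_univ (a k)) (Set.mem_univ (c k)) h
          (by norm_num : (0:ℝ) < 1/2) (by norm_num : (0:ℝ) < 1/2) (by norm_num)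
        simp only [smul_eq_mul] at this
        exact this.le
    · refine ⟨k₀, Finset.mem_univ k₀, ?_⟩
      rw [hmid k₀]
      have := strictConvexOn_exp.2 (Set.mem_univ (a k₀)) (Set.mem_univ (c k₀)) hk₀ne
        (by norm_num : (0:ℝ) < 1/2) (by norm_num : (0:ℝ) < 1/2) (by norm_num)
      simpa using this
  rw [hgeq] at hlt
  have : g u₀ ≤ g w := hmin w
  linarith
end

section
/- Let A be a finite-dimensional commutative unital algebra over ℂ, let a ∈ A, and let λ ∈ ℂ be an eigenvalue of the multiplication map L_a : A → A whose algebraic multiplicity is one. Then any eigenvector ψ of L_a with eigenvalue λ satisfies ψ·ψ = c • ψ for some nonzero c ∈ ℂ; in particular, after rescaling, ψ is a nonzero idempotent of A. -/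
/-!
Put `g = L_a - λ`. Since `ψ a = λ ψ`, the eigenvector `ψ` annihilates the range of `g`.
By Fitting's lemma `A` is spanned by the generalized eigenspace of `λ`, which is `ℂ ψ` by
multiplicity one, together with the range of `g`. Writing `1 = t ψ + g x` and multiplying by `ψ`
gives `ψ = t ψ²`, so `t ≠ 0` and `ψ² = t⁻¹ ψ`.
-/

open Module End

theorem Module.End.maxGenEigenspace_sup_range_sub_smul_eq_top {R M : Type*} [CommRing R]
    [AddCommGroup M] [Module R M] [IsNoetherian R M] [IsArtinian R M] (f : End R M) (μ : R) :
    f.maxGenEigenspace μ ⊔ LinearMap.range (f - μ • 1) = ⊤ := by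
  have hfitting := (LinearMap.isCompl_iSup_ker_pow_iInf_range_pow (f - μ • 1)).sup_eq_top
  simp_rw [← genEigenspace_nat, iSup_genEigenspace_eq] at hfitting
  refine top_le_iff.mp (hfitting ▸ sup_le_sup_left ?_ _)
  exact (iInf_le _ 1).trans_eq (by rw [pow_one])

theorem mul_eq_zero_of_mem_range_mulLeft_sub_smul {R A : Type*} [CommRing R] [CommRing A]
    [Algebra R A] {a ψ : A} {μ : R} (heig : a * ψ = μ • ψ) :
    ∀ y ∈ LinearMap.range (LinearMap.mulLeft R a - μ • 1), ψ * y = 0 := by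
  rintro _ ⟨x, rfl⟩
  simp only [LinearMap.sub_apply, LinearMap.smul_apply, Module.End.one_apply,
    LinearMap.mulLeft_apply]
  rw [mul_sub, mul_smul_comm, mul_left_comm, ← mul_assoc, heig, smul_mul_assoc, sub_self]

theorem exists_mul_self_eq_smul_of_span_sup_eq_top {K A : Type*} [Field K] [Ring A]
    [Algebra K A] {ψ : A} (hψ : ψ ≠ 0) {W : Submodule K A} (hW : ∀ y ∈ W, ψ * y = 0)
    (hsup : K ∙ ψ ⊔ W = ⊤) : ∃ c : K, c ≠ 0 ∧ ψ * ψ = c • ψ := by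
  obtain ⟨_, hk, y, hy, hone⟩ := Submodule.mem_sup.mp (hsup ▸ Submodule.mem_top (x := (1 : A)))
  obtain ⟨t, rfl⟩ := Submodule.mem_span_singleton.mp hk
  have hψ_eq : ψ = t • (ψ * ψ) := by
    calc ψ = ψ * (t • ψ + y) := by rw [hone, mul_one]
      _ = t • (ψ * ψ) := by rw [mul_add, hW y hy, add_zero, mul_smul_comm]
  have ht : t ≠ 0 := by
    rintro rfl
    exact hψ (by rwa [zero_smul] at hψ_eq)
  refine ⟨t⁻¹, inv_ne_zero ht, ?_⟩
  rw [hψ_eq, smul_smul, inv_mul_cancel₀ ht, one_smul, ← hψ_eq]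

theorem isIdempotentElem_inv_smul_of_mul_self_eq_smul {K A : Type*} [Field K] [Ring A]
    [Algebra K A] {ψ : A} {c : K} (hc : c ≠ 0) (h : ψ * ψ = c • ψ) :
    IsIdempotentElem (c⁻¹ • ψ) := by
  rw [IsIdempotentElem, smul_mul_smul_comm, h, smul_smul, mul_assoc, inv_mul_cancel₀ hc, mul_one]

/-- Let `A` be a finite-dimensional commutative unital `ℂ`-algebra, `a ∈ A`,
and `λ` an eigenvalue of the multiplication map `L_a : A → A` of algebraic
multiplicity one (i.e. with one-dimensional generalized eigenspace). Then any
eigenvector `ψ` of `L_a` with eigenvalue `λ` satisfies `ψ·ψ = c • ψ` for some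
nonzero `c ∈ ℂ`; in particular `c⁻¹ • ψ` is a nonzero idempotent. -/
theorem eigenvector_mul_self_of_multiplicity_one
    {A : Type*} [CommRing A] [Algebra ℂ A] [FiniteDimensional ℂ A]
    (a : A) (lam : ℂ)
    (hmult : Module.finrank ℂ
      (Module.End.maxGenEigenspace (LinearMap.mulLeft ℂ a) lam) = 1)
    (ψ : A) (hψ : ψ ≠ 0) (heig : a * ψ = lam • ψ) :
    ∃ c : ℂ, c ≠ 0 ∧ ψ * ψ = c • ψ ∧ IsIdempotentElem (c⁻¹ • ψ) := by
  set f : End ℂ A := LinearMap.mulLeft ℂ a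
  have hψ_mem : ψ ∈ f.maxGenEigenspace lam :=
    eigenspace_le_maxGenEigenspace (mem_eigenspace_iff.mpr heig)
  have hspan : ℂ ∙ ψ = f.maxGenEigenspace lam :=
    Submodule.eq_of_le_of_finrank_eq ((Submodule.span_singleton_le_iff_mem _ _).mpr hψ_mem)
      (by rw [finrank_span_singleton hψ, hmult])
  obtain ⟨c, hc, hψψ⟩ := exists_mul_self_eq_smul_of_span_sup_eq_top hψ
    (mul_eq_zero_of_mem_range_mulLeft_sub_smul heig)
    (hspan ▸ f.maxGenEigenspace_sup_range_sub_smul_eq_top lam)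
  exact ⟨c, hc, hψψ, isIdempotentElem_inv_smul_of_mul_self_eq_smul hc hψψ⟩
end

section
/- Let n and r be integers with 1 ≤ r < n, and let k_1, …, k_r be pairwise distinct integers in {0, 1, …, n−1}. Then |∑_{j=1}^r e^{2πi·k_j/n}| ≤ sin(πr/n)/sin(π/n). -/
open Complex Finset

lemma sin_sq_half' (ψ : ℝ) : Real.sin (ψ/2) ^ 2 = (1 - Real.cos ψ) / 2 := by
  have h := Real.abs_sin_half ψ
  have h2 : |Real.sin (ψ/2)| ^ 2 = (1 - Real.cos ψ) / 2 := by
    rw [h, Real.sq_sqrt]; linarith [Real.cos_le_one ψ]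
  rwa [_root_.sq_abs] at h2

lemma abs_exp_I_sub_one (ψ : ℝ) :
    ‖Complex.exp (ψ * I) - 1‖ = 2 * |Real.sin (ψ / 2)| := by
  rw [Complex.exp_mul_I]
  have h1 : Complex.cos ψ + Complex.sin ψ * I - 1
      = ((Real.cos ψ - 1 : ℝ) : ℂ) + ((Real.sin ψ : ℝ) : ℂ) * I := by
    push_cast [Complex.ofReal_cos, Complex.ofReal_sin]
    ring
  rw [h1, Complex.norm_add_mul_I]
  have h2 : (Real.cos ψ - 1) ^ 2 + Real.sin ψ ^ 2 = (2 * |Real.sin (ψ/2)|)^2 := by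
    have := sin_sq_half' ψ
    have hs := Real.sin_sq_add_cos_sq ψ
    rw [mul_pow, _root_.sq_abs]
    nlinarith
  rw [h2, Real.sqrt_sq (by positivity)]

lemma sum_cos_arith_le (n s : ℕ) (hn : 2 ≤ n) (hs : s ≤ n) (β : ℝ) :
    ∑ j ∈ Finset.range s, Real.cos (β + 2*Real.pi*j/n) ≤
      Real.sin (Real.pi*s/n) / Real.sin (Real.pi/n) := by
  have hn0 : (0:ℝ) < n := by positivity
  have hsinpos : 0 < Real.sin (Real.pi/n) := by
    apply Real.sin_pos_of_pos_of_lt_pi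
    · positivity
    · rw [div_lt_iff₀ hn0]
      have h2 : (2:ℝ) ≤ n := by exact_mod_cast hn
      nlinarith [Real.pi_pos]
  set q : ℂ := Complex.exp ((2*Real.pi/n : ℝ) * I) with hqdef
  have habsq1 : ‖q - 1‖ = 2 * Real.sin (Real.pi/n) := by
    rw [hqdef, abs_exp_I_sub_one]
    rw [show (2*Real.pi/n)/2 = Real.pi/n by ring, abs_of_pos hsinpos]
  have hq : q ≠ 1 := by
    intro h
    rw [h] at habsq1
    simp at habsq1
    linarith
  have hqs : q ^ s = Complex.exp ((2*Real.pi*s/n : ℝ) * I) := by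
    rw [hqdef, ← Complex.exp_nat_mul]
    congr 1
    push_cast
    ring
  have habsqs : ‖q ^ s - 1‖ = 2 * Real.sin (Real.pi*s/n) := by
    rw [hqs, abs_exp_I_sub_one, show (2*Real.pi*s/n)/2 = Real.pi*s/n by ring]
    rw [_root_.abs_of_nonneg]
    apply Real.sin_nonneg_of_nonneg_of_le_pi
    · positivity
    · rw [div_le_iff₀ hn0]
      have : (s:ℝ) ≤ n := by exact_mod_cast hs
      nlinarith [Real.pi_pos]
  have hterm : ∀ j ∈ Finset.range s,
      Complex.exp ((β + 2*Real.pi*j/n : ℝ) * I) = Complex.exp ((β:ℝ) * I) * q ^ j := by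
    intro j _
    rw [hqdef, ← Complex.exp_nat_mul, ← Complex.exp_add]
    congr 1
    push_cast
    ring
  have hsum : (∑ j ∈ Finset.range s, Complex.exp ((β + 2*Real.pi*j/n : ℝ) * I))
      = Complex.exp ((β:ℝ) * I) * ((q ^ s - 1) / (q - 1)) := by
    rw [Finset.sum_congr rfl hterm, ← Finset.mul_sum, geom_sum_eq hq]
  have hre : ∑ j ∈ Finset.range s, Real.cos (β + 2*Real.pi*j/n)
      = (∑ j ∈ Finset.range s, Complex.exp ((β + 2*Real.pi*j/n : ℝ) * I)).re := by
    rw [Complex.re_sum]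
    exact Finset.sum_congr rfl fun j _ => (Complex.exp_ofReal_mul_I_re _).symm
  rw [hre]
  calc (∑ j ∈ Finset.range s, Complex.exp ((β + 2*Real.pi*j/n : ℝ) * I)).re
      ≤ ‖∑ j ∈ Finset.range s, Complex.exp ((β + 2*Real.pi*j/n : ℝ) * I)‖ :=
        Complex.re_le_norm _
    _ = Real.sin (Real.pi*s/n) / Real.sin (Real.pi/n) := by
        rw [hsum, norm_mul, norm_div, Complex.norm_exp_ofReal_mul_I, habsqs, habsq1, one_mul]
        field_simp

lemma trig_step (n r t : ℕ) (hn : 2 ≤ n) (hrn : r < n) (ht : t < r) :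
    Real.sin (Real.pi/n) * Real.cos (Real.pi*r/n)
      ≤ Real.sin (Real.pi*(t+1)/n) - Real.sin (Real.pi*t/n) := by
  have hn0 : (0:ℝ) < n := by positivity
  have hu0 : (0:ℝ) < Real.pi/(2*n) := by positivity
  set u := Real.pi/(2*n) with hu
  have hdiff : Real.sin (Real.pi*(t+1)/n) - Real.sin (Real.pi*t/n)
      = 2 * Real.sin u * Real.cos ((2*t+1) * u) := by
    have hnne : (n:ℝ) ≠ 0 := hn0.ne'
    have e1 : (Real.pi*(t+1)/n - Real.pi*t/n)/2 = u := by rw [hu]; field_simp; ring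
    have e2 : (Real.pi*(t+1)/n + Real.pi*t/n)/2 = (2*t+1)*u := by rw [hu]; field_simp; ring
    rw [Real.sin_sub_sin, e1, e2]
  have hsinp : Real.sin (Real.pi/n) = 2 * Real.sin u * Real.cos u := by
    rw [hu, show Real.pi/n = 2 * (Real.pi/(2*n)) by field_simp, Real.sin_two_mul]
  rw [hdiff, hsinp]
  have hsinu : 0 < Real.sin u := by
    apply Real.sin_pos_of_pos_of_lt_pi hu0
    rw [hu, div_lt_iff₀ (by positivity)]
    have h2 : (2:ℝ) ≤ n := by exact_mod_cast hn
    nlinarith [Real.pi_pos]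
  have key : Real.cos u * Real.cos (Real.pi*r/n) ≤ Real.cos ((2*t+1) * u) := by
    have h1 : Real.cos ((2*r-1) * u) ≤ Real.cos ((2*t+1) * u) := by
      apply Real.cos_le_cos_of_nonneg_of_le_pi
      · positivity
      · rw [hu, ← mul_div_assoc, div_le_iff₀ (by positivity : (0:ℝ) < 2*n)]
        have hr : (r:ℝ) ≤ n := by exact_mod_cast hrn.le
        nlinarith [Real.pi_pos]
      · have : (2*(t:ℝ)+1) ≤ 2*r-1 := by
          have : (t:ℝ) + 1 ≤ r := by exact_mod_cast ht
          linarith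
        nlinarith
    have h2 : Real.cos u * Real.cos (Real.pi*r/n) ≤ Real.cos ((2*r-1) * u) := by
      have hexp : (2*(r:ℝ)-1) * u = Real.pi*r/n - u := by
        rw [hu]; field_simp
      rw [hexp, Real.cos_sub]
      have hsr : 0 ≤ Real.sin (Real.pi*r/n) := by
        apply Real.sin_nonneg_of_nonneg_of_le_pi
        · positivity
        · rw [div_le_iff₀ hn0]
          have hr : (r:ℝ) ≤ n := by exact_mod_cast hrn.le
          nlinarith [Real.pi_pos]
      nlinarith
    linarith
  nlinarith

lemma trig_sum (n r : ℕ) (hn : 2 ≤ n) (hrn : r < n) :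
    ∀ d s : ℕ, s + d = r →
      Real.sin (Real.pi*s/n) + (d:ℝ) * (Real.sin (Real.pi/n) * Real.cos (Real.pi*r/n))
        ≤ Real.sin (Real.pi*r/n) := by
  intro d
  induction d with
  | zero =>
      intro s h
      simp only [Nat.cast_zero, zero_mul, add_zero]
      rw [(by omega : s = r)]
  | succ d ih =>
      intro s h
      have hs : s < r := by omega
      have step := trig_step n r s hn hrn hs
      have ihs := ih (s+1) (by omega)
      have hcast : ((s:ℝ)+1) = ((s+1 : ℕ) : ℝ) := by push_cast; ring
      push_cast
      push_cast at ihs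
      nlinarith [step, ihs]

set_option maxHeartbeats 2000000 in
/-- The modulus of a sum of `r` pairwise distinct `n`-th roots of unity is at
most `sin(πr/n)/sin(π/n)`. -/
theorem abs_sum_distinct_roots_of_unity_le (n r : ℕ) (hr : 1 ≤ r) (hrn : r < n)
    (k : Fin r → ℕ) (hk : ∀ j, k j < n) (hinj : Function.Injective k) :
    ‖∑ j : Fin r, Complex.exp (2 * Real.pi * Complex.I * (k j) / n)‖ ≤
      Real.sin (Real.pi * r / n) / Real.sin (Real.pi / n) := by
  have hn2 : 2 ≤ n := by omega
  have hn0 : (0:ℝ) < n := by positivity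
  have hnne : (n:ℝ) ≠ 0 := hn0.ne'
  have hpne : Real.pi ≠ 0 := Real.pi_ne_zero
  have hpi := Real.pi_pos
  have hrle : (r:ℝ) ≤ n := by exact_mod_cast hrn.le
  have hsinp : 0 < Real.sin (Real.pi/n) := by
    apply Real.sin_pos_of_pos_of_lt_pi (by positivity)
    rw [div_lt_iff₀ hn0]
    have h2 : (2:ℝ) ≤ n := by exact_mod_cast hn2
    nlinarith
  set S := ∑ j : Fin r, Complex.exp (2 * Real.pi * Complex.I * (k j) / n) with hSdef
  set θ := S.arg with hθdef
  have habs : ‖S‖ = ∑ j : Fin r, Real.cos (2*Real.pi*(k j)/n - θ) := by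
    have h1 : ((‖S‖ : ℝ) : ℂ) = S * Complex.exp (-(θ:ℂ) * I) := by
      conv_rhs => rw [← Complex.norm_mul_exp_arg_mul_I S]
      rw [← hθdef, mul_assoc, ← Complex.exp_add]
      have he : (θ:ℂ) * I + -(θ:ℂ) * I = 0 := by ring
      rw [he, Complex.exp_zero, mul_one]
    have h2 : ‖S‖ = (S * Complex.exp (-(θ:ℂ) * I)).re := by
      rw [← h1, Complex.ofReal_re]
    rw [h2, hSdef, Finset.sum_mul, Complex.re_sum]
    apply Finset.sum_congr rfl
    intro j _
    rw [← Complex.exp_add]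
    have he : 2 * (Real.pi:ℂ) * I * (k j) / n + -(θ:ℂ) * I
        = ((2*Real.pi*(k j)/n - θ : ℝ) : ℂ) * I := by
      push_cast
      ring
    rw [he, Complex.exp_ofReal_mul_I_re]
  set lam := Real.cos (Real.pi*r/n) with hlam
  set c : ℝ := n*θ/(2*Real.pi) with hc
  have hθc : θ = 2*Real.pi*c/n := by rw [hc]; field_simp
  set f : ℤ → ℝ := fun m => Real.cos (2*Real.pi*m/n - θ) with hf
  have hangle : ∀ m : ℤ, 2*Real.pi*(m:ℝ)/n - θ = 2*Real.pi/n * ((m:ℝ) - c) := by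
    intro m; rw [hθc]; field_simp
  have hper : ∀ x t : ℤ, f (x + n * t) = f x := by
    intro x t
    simp only [hf]
    have he : 2*Real.pi*((x + n*t : ℤ):ℝ)/n - θ
        = (2*Real.pi*(x:ℝ)/n - θ) + (t:ℝ) * (2*Real.pi) := by
      push_cast
      field_simp
      ring
    rw [he, Real.cos_add_int_mul_two_pi]
  set lo : ℤ := ⌊c - r/2⌋ with hlo
  set hi : ℤ := ⌈c + r/2⌉ with hhi
  set a : ℤ := lo + 1 with ha
  have hhilo : hi ≤ lo + 1 + r := by
    have h1 : (hi:ℝ) < c + r/2 + 1 := by rw [hhi]; exact Int.ceil_lt_add_one _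
    have h2 : c - r/2 - 1 < (lo:ℝ) := by
      have := Int.lt_floor_add_one (c - r/2)
      rw [hlo]; linarith
    have h3 : (hi:ℝ) < (lo:ℝ) + r + 2 := by linarith
    have h4 : hi < lo + r + 2 := by exact_mod_cast h3
    omega
  set M := Finset.Ioo lo hi with hM
  set W := Finset.Ico a (a + n) with hW
  have hMsub : M ⊆ W := by
    intro m hm
    rw [hM, Finset.mem_Ioo] at hm
    rw [hW, Finset.mem_Ico]
    omega
  set s := M.card with hs
  have hscard : s = (hi - lo - 1).toNat := by rw [hs, hM, Int.card_Ioo]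
  have hsr : s ≤ r := by omega
  have hfM : ∀ m ∈ M, lam ≤ f m := by
    intro m hm
    rw [hM, Finset.mem_Ioo] at hm
    obtain ⟨hm1, hm2⟩ := hm
    rw [hlo] at hm1
    rw [hhi] at hm2
    have h1 : c - r/2 < (m:ℝ) := Int.floor_lt.mp hm1
    have h2 : (m:ℝ) < c + r/2 := Int.lt_ceil.mp hm2
    simp only [hf]
    rw [hangle m, hlam, ← Real.cos_abs (2*Real.pi/n * ((m:ℝ) - c))]
    apply Real.cos_le_cos_of_nonneg_of_le_pi (abs_nonneg _)
    · rw [div_le_iff₀ hn0]; nlinarith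
    · rw [abs_mul, abs_of_pos (by positivity : (0:ℝ) < 2*Real.pi/n)]
      have habs2 : |(m:ℝ) - c| ≤ r/2 := by
        rw [abs_le]; constructor <;> linarith
      calc 2*Real.pi/n * |(m:ℝ) - c| ≤ 2*Real.pi/n * (r/2) :=
            mul_le_mul_of_nonneg_left habs2 (by positivity)
        _ = Real.pi*r/n := by ring
  have hfW : ∀ m ∈ W, m ∉ M → f m ≤ lam := by
    intro m hmW hmM
    rw [hW, Finset.mem_Ico] at hmW
    rw [hM, Finset.mem_Ioo] at hmM
    push_neg at hmM
    have hm1 : hi ≤ m := hmM (by omega)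
    have h1 : c + r/2 ≤ (m:ℝ) := by
      rw [hhi] at hm1
      exact_mod_cast Int.ceil_le.mp hm1
    have h2 : (m:ℝ) ≤ c - r/2 + n := by
      have hm2 : m ≤ lo + n := by omega
      have hfl : (lo:ℝ) ≤ c - r/2 := by rw [hlo]; exact Int.floor_le _
      have h3 : (m:ℝ) ≤ (lo:ℝ) + n := by exact_mod_cast hm2
      linarith
    simp only [hf]
    rw [hangle m, hlam]
    set ψ := 2*Real.pi/n * ((m:ℝ) - c) with hψ
    have hψ1 : Real.pi*r/n ≤ ψ := by
      have h3 : (r:ℝ)/2 ≤ (m:ℝ) - c := by linarith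
      calc Real.pi*r/n = 2*Real.pi/n * (r/2) := by ring
        _ ≤ 2*Real.pi/n * ((m:ℝ) - c) := mul_le_mul_of_nonneg_left h3 (by positivity)
    have hψ2 : ψ ≤ 2*Real.pi - Real.pi*r/n := by
      have h3 : (m:ℝ) - c ≤ n - r/2 := by linarith
      calc 2*Real.pi/n * ((m:ℝ) - c) ≤ 2*Real.pi/n * (n - r/2) :=
            mul_le_mul_of_nonneg_left h3 (by positivity)
        _ = 2*Real.pi - Real.pi*r/n := by field_simp
    have hrpin : (0:ℝ) ≤ Real.pi*r/n := by positivity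
    by_cases hcase : ψ ≤ Real.pi
    · exact Real.cos_le_cos_of_nonneg_of_le_pi hrpin hcase hψ1
    · push_neg at hcase
      rw [← Real.cos_two_pi_sub]
      exact Real.cos_le_cos_of_nonneg_of_le_pi hrpin (by linarith) (by linarith)
  have hnZ : (0:ℤ) < n := by exact_mod_cast (by omega : 0 < n)
  set g : Fin r → ℤ := fun j => a + ((k j : ℤ) - a) % n with hg
  have hgW : ∀ j, g j ∈ W := by
    intro j
    rw [hW, Finset.mem_Ico]
    have h1 := Int.emod_nonneg ((k j : ℤ) - a) (by omega : (n:ℤ) ≠ 0)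
    have h2 := Int.emod_lt_of_pos ((k j : ℤ) - a) hnZ
    simp only [hg]
    omega
  have hgf : ∀ j, f (g j) = f ((k j : ℤ)) := by
    intro j
    have he : g j = (k j : ℤ) + n * (-(((k j : ℤ) - a) / n)) := by
      simp only [hg]
      rw [Int.emod_def]
      ring
    rw [he, hper]
  have hginj : Function.Injective g := by
    intro j j' he
    simp only [hg] at he
    have he2 : ((k j : ℤ) - a) % n = ((k j' : ℤ) - a) % n := by omega
    have h3 : (k j : ℤ) - a ≡ (k j' : ℤ) - a [ZMOD n] := he2
    have h4 := (Int.ModEq.add_right a h3).dvd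
    have h5 : (n:ℤ) ∣ (k j' : ℤ) - (k j : ℤ) := by simpa using h4
    have hb1 : (k j : ℤ) < n := by exact_mod_cast hk j
    have hb2 : (k j' : ℤ) < n := by exact_mod_cast hk j'
    have h6 : (k j' : ℤ) - (k j : ℤ) = 0 :=
      Int.eq_zero_of_abs_lt_dvd h5 (by rw [abs_lt]; constructor <;> omega)
    have heq : k j = k j' := by omega
    exact hinj heq
  have hsum1 : ∑ j : Fin r, Real.cos (2*Real.pi*(k j)/n - θ) = ∑ j : Fin r, f (g j) := by
    apply Finset.sum_congr rfl
    intro j _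
    rw [hgf]
    simp only [hf]
    norm_cast
  have hsum2 : ∑ j : Fin r, f (g j) ≤ (r:ℝ) * lam + ∑ m ∈ W, max (f m - lam) 0 := by
    have e1 : ∑ j : Fin r, f (g j) = (r:ℝ)*lam + ∑ j : Fin r, (f (g j) - lam) := by
      rw [Finset.sum_sub_distrib, Finset.sum_const, Finset.card_univ, Fintype.card_fin,
        nsmul_eq_mul]
      ring
    rw [e1]
    have e2 : ∑ j : Fin r, (f (g j) - lam) ≤ ∑ m ∈ W, max (f m - lam) 0 := by
      calc ∑ j : Fin r, (f (g j) - lam) ≤ ∑ j : Fin r, max (f (g j) - lam) 0 :=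
            Finset.sum_le_sum (fun j _ => le_max_left _ _)
        _ = ∑ m ∈ Finset.univ.image g, max (f m - lam) 0 := by
            rw [Finset.sum_image (fun x _ y _ h => hginj h)]
        _ ≤ ∑ m ∈ W, max (f m - lam) 0 := by
            apply Finset.sum_le_sum_of_subset_of_nonneg
            · intro m hm
              rw [Finset.mem_image] at hm
              obtain ⟨j, _, rfl⟩ := hm
              exact hgW j
            · intro m _ _
              exact le_max_right _ _
    linarith
  have hsum3 : ∑ m ∈ W, max (f m - lam) 0 = ∑ m ∈ M, (f m - lam) := by
    have h1 : ∑ m ∈ M, max (f m - lam) 0 = ∑ m ∈ W, max (f m - lam) 0 :=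
      Finset.sum_subset hMsub (fun m hmW hmM => max_eq_right (by linarith [hfW m hmW hmM]))
    have h2 : ∑ m ∈ M, max (f m - lam) 0 = ∑ m ∈ M, (f m - lam) :=
      Finset.sum_congr rfl (fun m hm => max_eq_left (by linarith [hfM m hm]))
    rw [← h1, h2]
  have hsum4 : ∑ m ∈ M, (f m - lam) = (∑ m ∈ M, f m) - (s:ℝ) * lam := by
    rw [Finset.sum_sub_distrib, Finset.sum_const, nsmul_eq_mul, ← hs]
  have hMre : ∑ m ∈ M, f m = ∑ j ∈ Finset.range s, f (a + j) := by
    have hMeq : M = Finset.map ⟨fun j : ℕ => a + (j:ℤ), show Function.Injective (fun j : ℕ => a + (j:ℤ)) from fun x y h => Nat.cast_inj.mp (add_left_cancel h)⟩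
        (Finset.range s) := by
      ext m
      simp only [Finset.mem_map, Finset.mem_range, Function.Embedding.coeFn_mk, hM,
        Finset.mem_Ioo]
      constructor
      · rintro ⟨h1, h2⟩
        exact ⟨(m - a).toNat, by omega, by omega⟩
      · rintro ⟨j, hj, rfl⟩
        omega
    rw [hMeq, Finset.sum_map]
    simp
  have hMle : ∑ j ∈ Finset.range s, f (a + (j:ℤ)) ≤ Real.sin (Real.pi*s/n)/Real.sin (Real.pi/n) := by
    have e : ∀ j ∈ Finset.range s, f (a + (j:ℤ)) = Real.cos ((2*Real.pi*a/n - θ) + 2*Real.pi*j/n) := by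
      intro j _
      simp only [hf]
      congr 1
      push_cast
      ring
    rw [Finset.sum_congr rfl e]
    exact sum_cos_arith_le n s hn2 (by omega) _
  have hfin : Real.sin (Real.pi*s/n)/Real.sin (Real.pi/n) + ((r:ℝ) - s) * lam
      ≤ Real.sin (Real.pi*r/n)/Real.sin (Real.pi/n) := by
    have ht := trig_sum n r hn2 hrn (r - s) s (by omega)
    have hds : ((r - s : ℕ):ℝ) = (r:ℝ) - s := by
      push_cast [Nat.cast_sub hsr]
      ring
    rw [hds] at ht
    rw [hlam, div_add' _ _ _ hsinp.ne']
    apply (div_le_div_iff_of_pos_right hsinp).mpr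
    nlinarith [ht]
  calc ‖S‖ = ∑ j : Fin r, f (g j) := by rw [habs, hsum1]
    _ ≤ (r:ℝ) * lam + ∑ m ∈ W, max (f m - lam) 0 := hsum2
    _ = (r:ℝ) * lam + ((∑ m ∈ M, f m) - (s:ℝ) * lam) := by rw [hsum3, hsum4]
    _ = (∑ m ∈ M, f m) + ((r:ℝ) - s) * lam := by ring
    _ ≤ Real.sin (Real.pi*s/n)/Real.sin (Real.pi/n) + ((r:ℝ) - s) * lam := by
        rw [hMre]
        exact add_le_add_left hMle _
    _ ≤ Real.sin (Real.pi*r/n)/Real.sin (Real.pi/n) := hfin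
end

section
/- Let n and r be integers with 1 ≤ r < n, and let k_1, …, k_r be pairwise distinct integers in {0, 1, …, n−1}. Then |∑_{j=1}^r e^{2πi·k_j/n}| = sin(πr/n)/sin(π/n) if and only if the residues {k_1, …, k_r} modulo n form a set of r consecutive residues, i.e. there exists k ∈ ℤ with {k_1, …, k_r} ≡ {k, k+1, …, k+r−1} (mod n). -/
/-!
Among the `r`-element subsets of `ZMod n`, take one maximizing the modulus of its sum `S` of
roots of unity. Exchanging an element of the subset for one outside cannot increase `‖S‖`, hence
cannot increase the component of the sum along `S`: the subset consists of the `r` residues whose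
roots of unity are closest to the direction of `S`, and such residues are consecutive. A geometric
sum shows that every `r` consecutive residues give the modulus `sin(πr/n)/sin(π/n)`, which is
therefore the maximum, and a subset attaining it is itself a maximizer, hence consecutive.
-/

open Complex Finset
open scoped Real ComplexConjugate

theorem sin_pi_mul_div_nonneg {m n : ℕ} (hmn : m ≤ n) : 0 ≤ Real.sin (π * m / n) := by
  apply Real.sin_nonneg_of_nonneg_of_le_pi (by positivity)
  rcases n.eq_zero_or_pos with rfl | hn
  · simp [Real.pi_nonneg]
  rw [div_le_iff₀ (by positivity)]
  exact mul_le_mul_of_nonneg_left (by exact_mod_cast hmn) Real.pi_nonneg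

theorem sin_pi_mul_div_pos {m n : ℕ} (hm : 0 < m) (hmn : m < n) : 0 < Real.sin (π * m / n) := by
  have : (0 : ℝ) < n := by exact_mod_cast hm.trans hmn
  apply Real.sin_pos_of_pos_of_lt_pi (by positivity)
  rw [div_lt_iff₀ this]
  exact mul_lt_mul_of_pos_left (by exact_mod_cast hmn) Real.pi_pos

theorem sin_pi_div_pos {n : ℕ} (hn : 1 < n) : 0 < Real.sin (π / n) := by
  simpa using sin_pi_mul_div_pos (m := 1) one_pos hn

theorem Int.exists_eq_Ico_of_abs_sub_le (W : Finset ℤ) (x : ℝ)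
    (h : ∀ m ∈ W, ∀ m' ∉ W, |(m : ℝ) - x| ≤ |(m' : ℝ) - x|) :
    ∃ c : ℤ, W = Ico c (c + W.card) := by
  rcases W.eq_empty_or_nonempty with rfl | hne
  · exact ⟨0, by simp⟩
  set lo := W.min' hne
  set hi := W.max' hne
  have hIcc : W = Icc lo hi := by
    ext m
    refine ⟨fun hm => mem_Icc.2 ⟨W.min'_le m hm, W.le_max' m hm⟩, fun hm => ?_⟩
    obtain ⟨hlo, hhi⟩ := mem_Icc.1 hm
    rcases hlo.eq_or_lt with rfl | hlo
    · exact W.min'_mem hne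
    rcases hhi.eq_or_lt with rfl | hhi
    · exact W.max'_mem hne
    by_contra hmW
    have hlo_le := h lo (W.min'_mem hne) m hmW
    have hhi_le := h hi (W.max'_mem hne) m hmW
    have : (lo : ℝ) < m := by exact_mod_cast hlo
    have : (m : ℝ) < hi := by exact_mod_cast hhi
    rcases abs_cases ((m : ℝ) - x) with ⟨hm, _⟩ | ⟨hm, _⟩ <;>
      linarith [le_abs_self ((hi : ℝ) - x), neg_abs_le ((lo : ℝ) - x)]
  refine ⟨lo, ?_⟩
  rw [hIcc, Int.card_Icc]
  ext m
  simp only [mem_Icc, mem_Ico]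
  omega

theorem Int.mem_Ico_floor_add_one_iff (y : ℝ) (n : ℕ) (m : ℤ) :
    m ∈ Ico (⌊y⌋ + 1) (⌊y⌋ + 1 + n) ↔ y < m ∧ (m : ℝ) ≤ y + n := by
  rw [mem_Ico, Int.add_one_le_iff, Int.floor_lt, ← sub_lt_iff_lt_add, Int.lt_add_one_iff,
    Int.le_floor]
  push_cast
  rw [sub_le_iff_le_add]

def ZMod.reprIco {n : ℕ} (c : ℤ) (a : ZMod n) : ℤ := c + (a - c).val

section reprIco

variable {n : ℕ} [NeZero n] (c : ℤ)

@[simp]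
theorem ZMod.intCast_reprIco (a : ZMod n) : ((reprIco c a : ℤ) : ZMod n) = a := by
  simp [reprIco]

theorem ZMod.reprIco_mem_Ico (a : ZMod n) : reprIco c a ∈ Ico c (c + n) := by
  have := (a - c).val_lt
  simp only [reprIco, mem_Ico]
  omega

theorem ZMod.reprIco_intCast {m : ℤ} (hm : m ∈ Ico c (c + n)) : reprIco c (m : ZMod n) = m := by
  rw [mem_Ico] at hm
  have : (((m - c : ℤ) : ZMod n).val : ℤ) = m - c := by
    rw [ZMod.val_intCast, Int.emod_eq_of_lt] <;> omega
  simp only [reprIco, ← Int.cast_sub, this]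
  ring

end reprIco

def consecutiveResidues (n : ℕ) (c : ℤ) (r : ℕ) : Finset (ZMod n) :=
  Finset.image (fun i : Fin r => ((c + (i : ℕ) : ℤ) : ZMod n)) Finset.univ

theorem image_intCast_Ico_eq_consecutiveResidues (n : ℕ) (c : ℤ) (r : ℕ) :
    (Ico c (c + r)).image (Int.cast : ℤ → ZMod n) = consecutiveResidues n c r := by
  ext a
  simp only [consecutiveResidues, mem_image, mem_Ico, mem_univ, true_and]
  constructor
  · rintro ⟨m, ⟨hcm, hmc⟩, rfl⟩
    exact ⟨⟨(m - c).toNat, by omega⟩, by congr 1; simp only; omega⟩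
  · rintro ⟨i, rfl⟩
    exact ⟨c + i, ⟨by omega, by omega⟩, rfl⟩

theorem injective_consecutiveResidues {n r : ℕ} (hrn : r ≤ n) (c : ℤ) :
    Function.Injective fun i : Fin r => ((c + (i : ℕ) : ℤ) : ZMod n) := by
  intro i j hij
  simp only [Int.cast_add, Int.cast_natCast, add_right_inj] at hij
  have := congrArg ZMod.val hij
  rwa [ZMod.val_natCast_of_lt (by omega), ZMod.val_natCast_of_lt (by omega), Fin.val_inj] at this

theorem norm_stdAddChar_natCast_sub_one {n : ℕ} [NeZero n] {m : ℕ} (hmn : m ≤ n) :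
    ‖ZMod.stdAddChar (m : ZMod n) - 1‖ = 2 * Real.sin (π * m / n) := by
  have h := ZMod.stdAddChar_coe (N := n) m
  push_cast at h
  rw [h, show 2 * π * I * m / n = I * ((2 * π * m / n : ℝ) : ℂ) by push_cast; ring,
    norm_exp_I_mul_ofReal_sub_one, show 2 * π * m / n / 2 = π * m / n by ring, Real.norm_eq_abs,
    abs_of_nonneg (by linarith [sin_pi_mul_div_nonneg hmn])]

theorem norm_sum_consecutiveResidues {n r : ℕ} [NeZero n] (hn : 1 < n) (hrn : r ≤ n) (c : ℤ) :
    ‖∑ a ∈ consecutiveResidues n c r, ZMod.stdAddChar a‖ =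
      Real.sin (π * r / n) / Real.sin (π / n) := by
  set ζ : ℂ := ZMod.stdAddChar (1 : ZMod n)
  have hζ : ‖ζ - 1‖ = 2 * Real.sin (π / n) := by
    simpa using norm_stdAddChar_natCast_sub_one (n := n) (m := 1) (by omega)
  have hsin := sin_pi_div_pos hn
  have hζ1 : ζ ≠ 1 := by
    rw [← sub_ne_zero, ← norm_pos_iff, hζ]
    positivity
  have hsum : ∑ a ∈ consecutiveResidues n c r, ZMod.stdAddChar a =
      ZMod.stdAddChar (c : ZMod n) * ((ζ ^ r - 1) / (ζ - 1)) := by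
    rw [consecutiveResidues, sum_image fun i _ j _ h => injective_consecutiveResidues hrn c h,
      ← geom_sum_eq hζ1, mul_sum, ← Fin.sum_univ_eq_sum_range]
    refine sum_congr rfl fun i _ => ?_
    rw [Int.cast_add, AddChar.map_add_eq_mul, Int.cast_natCast, ← AddChar.map_nsmul_eq_pow,
      nsmul_one]
  have hζr : ζ ^ r = ZMod.stdAddChar (r : ZMod n) := by
    rw [← AddChar.map_nsmul_eq_pow, nsmul_one]
  rw [hsum, norm_mul, ZMod.stdAddChar_apply, Circle.norm_coe, one_mul, norm_div, hζr,
    norm_stdAddChar_natCast_sub_one hrn, hζ]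
  field_simp

theorem re_mul_conj_sum_le_of_forall_norm_sum_le {α : Type*} [DecidableEq α] (f : α → ℂ)
    {B : Finset α}
    (hmax : ∀ B' : Finset α, B'.card = B.card → ‖∑ x ∈ B', f x‖ ≤ ‖∑ x ∈ B, f x‖)
    {a b : α} (ha : a ∈ B) (hb : b ∉ B) :
    (f b * conj (∑ x ∈ B, f x)).re ≤ (f a * conj (∑ x ∈ B, f x)).re := by
  set S := ∑ x ∈ B, f x
  have hba : b ∉ B.erase a := fun h => hb (mem_of_mem_erase h)
  have hcard : (insert b (B.erase a)).card = B.card := by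
    rw [card_insert_of_notMem hba, card_erase_add_one ha]
  have hswap : ∑ x ∈ insert b (B.erase a), f x = S + (f b - f a) := by
    rw [sum_insert hba, sum_erase_eq_sub ha]
    ring
  have hS : (S * conj S).re = ‖S‖ ^ 2 := by
    rw [mul_conj']
    norm_cast
  -- Swapping `a` for `b` cannot increase `‖S‖`, so it cannot increase the component along `S`.
  have : ((S + (f b - f a)) * conj S).re ≤ ‖S‖ ^ 2 :=
    calc ((S + (f b - f a)) * conj S).re ≤ ‖(S + (f b - f a)) * conj S‖ := re_le_norm _
      _ = ‖S + (f b - f a)‖ * ‖S‖ := by rw [norm_mul, norm_conj]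
      _ ≤ ‖S‖ * ‖S‖ := by
        gcongr
        rw [← hswap]
        exact hmax _ hcard
      _ = ‖S‖ ^ 2 := by ring
  simp only [add_mul, sub_mul, add_re, sub_re, hS] at this
  linarith

theorem re_stdAddChar_intCast_mul_conj {n : ℕ} [NeZero n] (m : ℤ) (z : ℂ) :
    (ZMod.stdAddChar (m : ZMod n) * conj z).re = ‖z‖ * Real.cos (2 * π * m / n - arg z) := by
  rw [ZMod.stdAddChar_coe, show 2 * π * I * m / n = ((2 * π * m / n : ℝ) : ℂ) * I by
    push_cast; ring, mul_re, exp_ofReal_mul_I_re, exp_ofReal_mul_I_im, conj_re, conj_im,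
    Real.cos_sub, ← norm_mul_cos_arg, ← norm_mul_sin_arg]
  ring

theorem abs_sub_le_abs_sub_of_cos_le {n θ u v : ℝ} (hn : 0 < n)
    (hu : |u - n * θ / (2 * π)| ≤ n / 2) (hv : |v - n * θ / (2 * π)| ≤ n / 2)
    (h : Real.cos (2 * π * v / n - θ) ≤ Real.cos (2 * π * u / n - θ)) :
    |u - n * θ / (2 * π)| ≤ |v - n * θ / (2 * π)| := by
  have hcos (w : ℝ) :
      Real.cos (2 * π * w / n - θ) = Real.cos (2 * π * |w - n * θ / (2 * π)| / n) := by
    rw [← Real.cos_abs, show 2 * π * w / n - θ = 2 * π * (w - n * θ / (2 * π)) / n by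
      field_simp, abs_div, abs_mul, abs_of_pos Real.two_pi_pos, abs_of_pos hn]
  have hangle {w : ℝ} (hw : |w - n * θ / (2 * π)| ≤ n / 2) :
      2 * π * |w - n * θ / (2 * π)| / n ∈ Set.Icc 0 π := by
    refine ⟨by positivity, ?_⟩
    rw [div_le_iff₀ hn]
    nlinarith [Real.pi_pos]
  rw [hcos, hcos, Real.strictAntiOn_cos.le_iff_ge (hangle hv) (hangle hu)] at h
  exact le_of_mul_le_mul_left ((div_le_div_iff_of_pos_right hn).1 h) Real.two_pi_pos

theorem exists_eq_consecutiveResidues_of_cos_le {n : ℕ} [NeZero n] (B : Finset (ZMod n)) (θ : ℝ)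
    (h : ∀ m m' : ℤ, (m : ZMod n) ∈ B → (m' : ZMod n) ∉ B →
      Real.cos (2 * π * m' / n - θ) ≤ Real.cos (2 * π * m / n - θ)) :
    ∃ c : ℤ, B = consecutiveResidues n c B.card := by
  have hn : (0 : ℝ) < n := by exact_mod_cast Nat.pos_of_neZero n
  -- With residue `m` at angle `2πm/n`, the angle `θ` sits at position `x`; residues are lifted
  -- to their representatives in the window `(x - n/2, x + n/2] = [c₀, c₀ + n)`.
  set x := n * θ / (2 * π)
  set c₀ := ⌊x - n / 2⌋ + 1
  have hwin (m : ℤ) : m ∈ Ico c₀ (c₀ + n) ↔ x - n / 2 < m ∧ (m : ℝ) ≤ x + n / 2 := by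
    rw [Int.mem_Ico_floor_add_one_iff]
    ring_nf
  have habs_le {m : ℤ} (hm : m ∈ Ico c₀ (c₀ + n)) : |(m : ℝ) - x| ≤ n / 2 := by
    rw [hwin] at hm
    exact abs_le.2 ⟨by linarith, by linarith⟩
  set W := B.image (ZMod.reprIco c₀)
  have hW : ∀ m ∈ W, ∀ m' ∉ W, |(m : ℝ) - x| ≤ |(m' : ℝ) - x| := by
    simp only [W, mem_image, not_exists, not_and]
    rintro _ ⟨a, ha, rfl⟩ m' hm'
    have ha_win := ZMod.reprIco_mem_Ico c₀ a
    by_cases hm'_win : m' ∈ Ico c₀ (c₀ + n)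
    · refine abs_sub_le_abs_sub_of_cos_le hn (habs_le ha_win) (habs_le hm'_win) ?_
      exact h _ m' (by simpa using ha) fun hB => hm' _ hB (ZMod.reprIco_intCast c₀ hm'_win)
    · rw [hwin, not_and_or, not_lt, not_le] at hm'_win
      refine (habs_le ha_win).trans ?_
      rcases hm'_win with h' | h' <;>
        linarith [neg_abs_le ((m' : ℝ) - x), le_abs_self ((m' : ℝ) - x)]
  obtain ⟨c, hc⟩ := Int.exists_eq_Ico_of_abs_sub_le W x hW
  refine ⟨c, ?_⟩
  rw [← image_intCast_Ico_eq_consecutiveResidues, ← card_image_of_injective B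
    (Function.LeftInverse.injective (ZMod.intCast_reprIco c₀)), ← hc, image_image]
  simp [Function.comp_def]

theorem exists_eq_consecutiveResidues_of_forall_norm_sum_le {n : ℕ} [NeZero n]
    {B : Finset (ZMod n)}
    (hmax : ∀ B' : Finset (ZMod n), B'.card = B.card →
      ‖∑ a ∈ B', ZMod.stdAddChar a‖ ≤ ‖∑ a ∈ B, ZMod.stdAddChar a‖)
    (hne : ∑ a ∈ B, ZMod.stdAddChar a ≠ 0) :
    ∃ c : ℤ, B = consecutiveResidues n c B.card := by
  refine exists_eq_consecutiveResidues_of_cos_le B (arg (∑ a ∈ B, ZMod.stdAddChar a))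
    fun m m' hm hm' => ?_
  have := re_mul_conj_sum_le_of_forall_norm_sum_le ZMod.stdAddChar hmax hm hm'
  rw [re_stdAddChar_intCast_mul_conj, re_stdAddChar_intCast_mul_conj] at this
  exact le_of_mul_le_mul_left this (norm_pos_iff.2 hne)

theorem norm_sum_stdAddChar_le {n r : ℕ} [NeZero n] (hn : 1 < n) (hrn : r ≤ n)
    (B : Finset (ZMod n)) (hB : B.card = r) :
    ‖∑ a ∈ B, ZMod.stdAddChar a‖ ≤ Real.sin (π * r / n) / Real.sin (π / n) := by
  obtain ⟨B₀, hB₀, hmax⟩ := exists_max_image (powersetCard r univ)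
    (fun B => ‖∑ a ∈ B, ZMod.stdAddChar a‖) ⟨B, mem_powersetCard_univ.2 hB⟩
  rw [mem_powersetCard_univ] at hB₀
  replace hmax (B' : Finset (ZMod n)) (hB' : B'.card = B₀.card) :=
    hmax B' (mem_powersetCard_univ.2 (hB'.trans hB₀))
  refine (hmax B (hB.trans hB₀.symm)).trans ?_
  by_cases hne : ∑ a ∈ B₀, ZMod.stdAddChar a = 0
  · rw [hne, norm_zero]
    exact div_nonneg (sin_pi_mul_div_nonneg hrn) (sin_pi_div_pos hn).le
  obtain ⟨c, hc⟩ := exists_eq_consecutiveResidues_of_forall_norm_sum_le hmax hne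
  rw [hc, hB₀, norm_sum_consecutiveResidues hn hrn]

/-- A sum of `r` pairwise distinct `n`-th roots of unity has the maximal
modulus `sin(πr/n)/sin(π/n)` if and only if the exponents form a set of `r`
consecutive residues modulo `n`. -/
theorem abs_sum_distinct_roots_of_unity_eq_iff_consecutive
    (n r : ℕ) (hr : 1 ≤ r) (hrn : r < n)
    (k : Fin r → ℕ) (hk : ∀ j, k j < n) (hinj : Function.Injective k) :
    ‖∑ j : Fin r, Complex.exp (2 * Real.pi * Complex.I * (k j) / n)‖ =
        Real.sin (Real.pi * r / n) / Real.sin (Real.pi / n) ↔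
      ∃ c : ℤ, Finset.image (fun j : Fin r => ((k j : ℤ) : ZMod n)) Finset.univ =
        Finset.image (fun i : Fin r => ((c + (i : ℕ) : ℤ) : ZMod n)) Finset.univ := by
  have : NeZero n := ⟨by omega⟩
  set A := image (fun j : Fin r => ((k j : ℤ) : ZMod n)) univ
  have hA_inj : Function.Injective fun j : Fin r => ((k j : ℤ) : ZMod n) := fun i j hij => by
    simpa [ZMod.val_natCast_of_lt (hk i), ZMod.val_natCast_of_lt (hk j), hinj.eq_iff] using
      congrArg ZMod.val hij
  have hA : A.card = r := by rw [card_image_of_injective _ hA_inj, card_univ, Fintype.card_fin]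
  have hsum : ∑ j : Fin r, Complex.exp (2 * π * I * (k j) / n) = ∑ a ∈ A, ZMod.stdAddChar a := by
    rw [sum_image fun i _ j _ h => hA_inj h]
    refine sum_congr rfl fun j _ => ?_
    rw [ZMod.stdAddChar_coe]
    push_cast
    rfl
  rw [hsum]
  constructor
  · intro h
    have hpos : 0 < ‖∑ a ∈ A, ZMod.stdAddChar a‖ := h ▸ div_pos (sin_pi_mul_div_pos hr hrn)
      (sin_pi_div_pos (by omega))
    obtain ⟨c, hc⟩ := exists_eq_consecutiveResidues_of_forall_norm_sum_le
      (fun B hB => h ▸ norm_sum_stdAddChar_le (by omega) hrn.le B (hB.trans hA))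
      (norm_pos_iff.1 hpos)
    exact ⟨c, hA ▸ hc⟩
  · rintro ⟨c, hc⟩
    exact hc ▸ norm_sum_consecutiveResidues (by omega) hrn.le c
end

section
/- Let r ≥ 1, let α_1, …, α_r ∈ ℂ, and let F : ℂ^r → ℂ be the entire function F(t) = exp(∑_{i=1}^r α_i t_i). For each i let D_i be the operator sending a function h : ℂ^r → ℂ to the function t ↦ t_i · (∂h/∂t_i)(t). Then applying the pairwise-difference operators (D_i − D_j), for all pairs 1 ≤ i < j ≤ r composed in lexicographic order, to F yields the function t ↦ exp(∑_{i=1}^r α_i t_i) · ∏_{1 ≤ i < j ≤ r} (α_i t_i − α_j t_j). -/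
/-- The operator `D_i` sending `h : ℂʳ → ℂ` to `t ↦ t_i · ∂h/∂t_i(t)`. -/
noncomputable def thetaOp (r : ℕ) (i : Fin r) :
    ((Fin r → ℂ) → ℂ) → ((Fin r → ℂ) → ℂ) :=
  fun h t => t i * deriv (fun z : ℂ => h (Function.update t i z)) (t i)

/-- The list of pairs `(i, j)` with `i < j` in `Fin r`, in lexicographic
order. -/
def lexPairs (r : ℕ) : List (Fin r × Fin r) :=
  (List.finRange r).flatMap fun i =>
    ((List.finRange r).filter fun j => i < j).map fun j => (i, j)

/-!
Put `x_i = α_i t_i`. Conjugation by `exp (∑ x_i)` turns `D_i` into `δ_i = x_i (1 + ∂/∂x_i)`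
(`eulerTwist i`) acting on polynomials in `x`, so the claim is
`∏_{i<j} (δ_i - δ_j) 1 = ∏_{i<j} (x_i - x_j)`. The linear map `x^e ↦ ∏_j T_{e_j}(x_j)`
(`touchardTransform`), where `T_{k+1} = x (T_k + T_k')` are the Touchard polynomials, sends `x_i Q`
to `δ_i` of the image of `Q`; hence the left side is the image of
`∏_{i<j} (x_i - x_j) = ± det (x_j ^ k)`, which is `± det (T_k(x_j))`. Since `T_k` is monic of
degree `k`, column operations give `det (T_k(x_j)) = det (x_j ^ k)`.
-/

open scoped Polynomial

namespace Polynomial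

variable (R : Type*) [CommSemiring R]

noncomputable def touchard : ℕ → R[X]
  | 0 => 1
  | k + 1 => X * (touchard k + derivative (touchard k))

variable {R} [Nontrivial R]

theorem touchard_monic_and_natDegree (k : ℕ) :
    (touchard R k).Monic ∧ (touchard R k).natDegree = k := by
  induction k with
  | zero => simp [touchard]
  | succ k ih =>
    obtain ⟨hmonic, hdeg⟩ := ih
    have hlt : (derivative (touchard R k)).degree < (touchard R k).degree :=
      degree_derivative_lt hmonic.ne_zero
    have hsum : (touchard R k + derivative (touchard R k)).Monic := hmonic.add_of_left hlt
    refine ⟨monic_X.mul hsum, ?_⟩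
    rw [touchard, natDegree_X_mul hsum.ne_zero, natDegree_add_eq_left_of_degree_lt hlt, hdeg]

theorem monic_touchard (k : ℕ) : (touchard R k).Monic := (touchard_monic_and_natDegree k).1

theorem natDegree_touchard (k : ℕ) : (touchard R k).natDegree = k :=
  (touchard_monic_and_natDegree k).2

end Polynomial

namespace MvPolynomial

section CommSemiring

variable {σ R : Type*} [CommSemiring R]

noncomputable def eulerTwist (i : σ) : Module.End R (MvPolynomial σ R) :=
  LinearMap.mulLeft R (X i) ∘ₗ (LinearMap.id + (pderiv i).toLinearMap)

theorem eulerTwist_apply (i : σ) (P : MvPolynomial σ R) :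
    eulerTwist i P = X i * (P + pderiv i P) := rfl

theorem eulerTwist_mul_of_pderiv_eq_zero (i : σ) (P : MvPolynomial σ R) {Q : MvPolynomial σ R}
    (hQ : pderiv i Q = 0) : eulerTwist i (P * Q) = eulerTwist i P * Q := by
  simp only [eulerTwist_apply, Derivation.leibniz, hQ, smul_eq_mul]
  ring

theorem eulerTwist_aeval_touchard (i : σ) (k : ℕ) :
    eulerTwist i (Polynomial.aeval (X i : MvPolynomial σ R) (Polynomial.touchard R k)) =
      Polynomial.aeval (X i) (Polynomial.touchard R (k + 1)) := by
  simp [eulerTwist_apply, Derivation.map_aeval, Polynomial.touchard]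

theorem pderiv_aeval_X_of_ne {i j : σ} (h : j ≠ i) (T : R[X]) :
    pderiv i (Polynomial.aeval (X j : MvPolynomial σ R) T) = 0 := by
  simp [Derivation.map_aeval, pderiv_X_of_ne h]

variable (R) in
noncomputable def touchardMonomial (e : σ →₀ ℕ) : MvPolynomial σ R :=
  e.prod fun j k => Polynomial.aeval (X j) (Polynomial.touchard R k)

theorem touchardMonomial_zero : touchardMonomial R (0 : σ →₀ ℕ) = 1 :=
  Finsupp.prod_zero_index

theorem pderiv_touchardMonomial_erase (i : σ) (e : σ →₀ ℕ) :
    pderiv i (touchardMonomial R (e.erase i)) = 0 := by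
  classical
  refine Finset.prod_induction _ (fun q => pderiv i q = 0) (fun p q hp hq => ?_)
    (Derivation.map_one_eq_zero _) fun j hj => pderiv_aeval_X_of_ne ?_ _
  · simp [Derivation.leibniz, hp, hq]
  · simp_all [Finsupp.support_erase]

theorem touchardMonomial_single_add (i : σ) (e : σ →₀ ℕ) :
    touchardMonomial R (Finsupp.single i 1 + e) = eulerTwist i (touchardMonomial R e) := by
  have hsplit (f : σ →₀ ℕ) : touchardMonomial R f =
      Polynomial.aeval (X i) (Polynomial.touchard R (f i)) * touchardMonomial R (f.erase i) :=
    (Finsupp.mul_prod_erase' f i _ fun _ => map_one _).symm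
  rw [hsplit, hsplit e, eulerTwist_mul_of_pderiv_eq_zero _ _ (pderiv_touchardMonomial_erase i e),
    eulerTwist_aeval_touchard, Finsupp.erase_add, Finsupp.erase_single, zero_add]
  simp [add_comm]

variable (σ R) in
noncomputable def touchardTransform : MvPolynomial σ R →ₗ[R] MvPolynomial σ R :=
  (basisMonomials σ R).constr R (touchardMonomial R)

theorem touchardTransform_monomial (e : σ →₀ ℕ) (c : R) :
    touchardTransform σ R (monomial e c) = c • touchardMonomial R e := by
  have hbasis : monomial e c = c • basisMonomials σ R e := by simp [smul_monomial]
  rw [hbasis, map_smul, touchardTransform, Module.Basis.constr_basis]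

theorem touchardTransform_one : touchardTransform σ R 1 = 1 := by
  simpa [touchardMonomial_zero] using touchardTransform_monomial (0 : σ →₀ ℕ) (1 : R)

theorem touchardTransform_X_mul (i : σ) (Q : MvPolynomial σ R) :
    touchardTransform σ R (X i * Q) = eulerTwist i (touchardTransform σ R Q) := by
  induction Q using MvPolynomial.induction_on' with
  | add P Q hP hQ => rw [mul_add, map_add, map_add, map_add, hP, hQ]
  | monomial e c =>
    rw [← pow_one (X i), ← monomial_single_add, touchardTransform_monomial,
      touchardTransform_monomial, map_smul, touchardMonomial_single_add]

theorem touchardTransform_prod_X_pow [Fintype σ] (e : σ → ℕ) :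
    touchardTransform σ R (∏ j, X j ^ e j) =
      ∏ j, Polynomial.aeval (X j) (Polynomial.touchard R (e j)) := by
  have hmonomial : ∏ j, (X j : MvPolynomial σ R) ^ e j =
      monomial (Finsupp.equivFunOnFinite.symm e) 1 := by
    simp [monomial_eq, Finsupp.prod_fintype]
  rw [hmonomial, touchardTransform_monomial, one_smul, touchardMonomial,
    Finsupp.prod_fintype _ _ fun _ => map_one _]
  rfl

end CommSemiring

section CommRing

variable {σ R : Type*} [CommRing R]

theorem foldr_eulerTwist_sub_one (L : List (σ × σ)) :
    L.foldr (fun p Q => eulerTwist p.1 Q - eulerTwist p.2 Q) 1 =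
      touchardTransform σ R (L.map fun p => (X p.1 - X p.2 : MvPolynomial σ R)).prod := by
  induction L with
  | nil => simp [touchardTransform_one]
  | cons p L ih =>
    rw [List.foldr_cons, ih, List.map_cons, List.prod_cons, sub_mul, map_sub,
      touchardTransform_X_mul, touchardTransform_X_mul]

variable [Nontrivial R]

theorem touchardTransform_det_vandermonde (n : ℕ) :
    touchardTransform (Fin n) R (Matrix.vandermonde X).det = (Matrix.vandermonde X).det := by
  set N := Matrix.of fun i k : Fin n =>
    Polynomial.aeval (X i : MvPolynomial (Fin n) R) (Polynomial.touchard R k)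
  have hdet : (Matrix.vandermonde X).det = N.det := by
    rw [Matrix.det_eval_matrixOfPolynomials_eq_det_vandermonde _
      (fun k => (Polynomial.touchard R k).map (algebraMap R _))
      (fun k => by rw [(Polynomial.monic_touchard k).natDegree_map, Polynomial.natDegree_touchard])
      (fun k => (Polynomial.monic_touchard k).map _)]
    simp only [N, Polynomial.eval_map_algebraMap]
  calc touchardTransform (Fin n) R (Matrix.vandermonde X).det
      = touchardTransform (Fin n) R (Matrix.vandermonde X).transpose.det := by
        rw [Matrix.det_transpose]
    _ = N.transpose.det := by
        rw [Matrix.det_apply, Matrix.det_apply, map_sum]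
        refine Finset.sum_congr rfl fun τ _ => ?_
        simp only [Units.smul_def, map_zsmul, Matrix.transpose_apply, Matrix.vandermonde_apply, N,
          Matrix.of_apply, touchardTransform_prod_X_pow]
    _ = (Matrix.vandermonde X).det := by rw [Matrix.det_transpose, hdet]

theorem touchardTransform_prod_X_sub_X (n : ℕ) :
    touchardTransform (Fin n) R
        (∏ p ∈ Finset.univ.filter (fun p : Fin n × Fin n => p.1 < p.2), (X p.1 - X p.2)) =
      ∏ p ∈ Finset.univ.filter (fun p : Fin n × Fin n => p.1 < p.2), (X p.1 - X p.2) := by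
  set S := Finset.univ.filter (fun p : Fin n × Fin n => p.1 < p.2)
  have hprod : ∏ p ∈ S, (X p.1 - X p.2 : MvPolynomial (Fin n) R) =
      (-1) ^ S.card * (Matrix.vandermonde X).det := by
    rw [Matrix.det_vandermonde,
      ← Finset.prod_finset_product' S Finset.univ Finset.Ioi (by simp [S]), ← Finset.prod_neg]
    simp
  rcases neg_one_pow_eq_or (MvPolynomial (Fin n) R) S.card with h | h <;>
    simp [hprod, h, touchardTransform_det_vandermonde]

end CommRing

theorem hasDerivAt_eval_update {𝕜 σ : Type*} [NontriviallyNormedField 𝕜] [DecidableEq σ]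
    (P : MvPolynomial σ 𝕜) (v : σ → 𝕜) (i : σ) (z : 𝕜) :
    HasDerivAt (fun w => eval (Function.update v i w) P)
      (eval (Function.update v i z) (pderiv i P)) z := by
  induction P using MvPolynomial.induction_on with
  | C a => simpa using hasDerivAt_const z a
  | add p q hp hq => simpa using hp.fun_add hq
  | mul_X p k ih =>
    have hk := hasDerivAt_pi.1 (hasDerivAt_update v i z) k
    simp only [map_mul, eval_X]
    refine (ih.fun_mul hk).congr_deriv ?_
    rcases eq_or_ne k i with rfl | hki
    · simp [Derivation.leibniz]
      ring
    · simp [Derivation.leibniz, pderiv_X_of_ne hki, hki, mul_comm]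

end MvPolynomial

theorem mem_lexPairs {r : ℕ} {p : Fin r × Fin r} : p ∈ lexPairs r ↔ p.1 < p.2 := by
  obtain ⟨i, j⟩ := p
  simp [lexPairs]

theorem nodup_lexPairs (r : ℕ) : (lexPairs r).Nodup := by
  refine List.nodup_flatMap.2 ⟨fun i _ => ((List.nodup_finRange r).filter _).map
    fun _ _ h => (Prod.mk.inj h).2, (List.nodup_finRange r).imp fun hij p hp hp' => ?_⟩
  simp only [List.mem_map] at hp hp'
  obtain ⟨_, _, rfl⟩ := hp
  obtain ⟨_, _, h⟩ := hp'
  exact hij (Prod.mk.inj h).1.symm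

theorem prod_map_lexPairs {M : Type*} [CommMonoid M] (r : ℕ) (f : Fin r × Fin r → M) :
    ((lexPairs r).map f).prod =
      ∏ p ∈ Finset.univ.filter (fun p : Fin r × Fin r => p.1 < p.2), f p := by
  rw [← List.prod_toFinset f (nodup_lexPairs r)]
  congr
  ext p
  simp [mem_lexPairs]

open MvPolynomial

theorem thetaOp_exp_mul_eval {r : ℕ} (α : Fin r → ℂ) (i : Fin r)
    (P : MvPolynomial (Fin r) ℂ) :
    thetaOp r i (fun t => Complex.exp (∑ k, α k * t k) * eval (fun k => α k * t k) P) =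
      fun t => Complex.exp (∑ k, α k * t k) * eval (fun k => α k * t k) (eulerTwist i P) := by
  funext t
  set x : Fin r → ℂ := fun k => α k * t k
  have hline (z : ℂ) :
      (fun k => α k * Function.update t i z k) = Function.update x i (α i * z) :=
    funext fun k => Function.apply_update (fun k => (α k * ·)) t i z k
  have hexp : HasDerivAt (fun z => Complex.exp (∑ k, α k * Function.update t i z k))
      (Complex.exp (∑ k, α k * t k) * α i) (t i) := by
    have hsum := HasDerivAt.fun_sum (u := Finset.univ) fun k _ =>
      (hasDerivAt_pi.1 (hasDerivAt_update t i (t i)) k).const_mul (α k)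
    simpa [Pi.single_apply] using hsum.cexp
  have heval : HasDerivAt (fun z => eval (fun k => α k * Function.update t i z k) P)
      (eval x (pderiv i P) * α i) (t i) := by
    simp_rw [hline]
    have hcomp := (hasDerivAt_eval_update P x i (α i * t i)).comp (t i)
      ((hasDerivAt_id (t i)).const_mul (α i))
    simpa [x, Function.comp_def, Function.update_eq_self] using hcomp
  rw [thetaOp, (hexp.fun_mul heval).deriv, eulerTwist_apply]
  simp [x]
  ring

theorem foldr_thetaOp_exp_mul_eval {r : ℕ} (α : Fin r → ℂ) (L : List (Fin r × Fin r))
    (P : MvPolynomial (Fin r) ℂ) :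
    L.foldr (fun p h => fun t => thetaOp r p.1 h t - thetaOp r p.2 h t)
        (fun t => Complex.exp (∑ k, α k * t k) * eval (fun k => α k * t k) P) =
      fun t => Complex.exp (∑ k, α k * t k) *
        eval (fun k => α k * t k)
          (L.foldr (fun p Q => eulerTwist p.1 Q - eulerTwist p.2 Q) P) := by
  induction L with
  | nil => rfl
  | cons p L ih => simp only [List.foldr_cons, ih, thetaOp_exp_mul_eval, map_sub, mul_sub]

theorem antisym_derivation_general (r : ℕ) (α : Fin r → ℂ) :
    (lexPairs r).foldr
        (fun p h => fun t => thetaOp r p.1 h t - thetaOp r p.2 h t)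
        (fun t : Fin r → ℂ => Complex.exp (∑ i : Fin r, α i * t i)) =
      fun t : Fin r → ℂ =>
        Complex.exp (∑ i : Fin r, α i * t i) *
          ∏ p ∈ Finset.univ.filter (fun p : Fin r × Fin r => p.1 < p.2),
            (α p.1 * t p.1 - α p.2 * t p.2) := by
  have hconj := foldr_thetaOp_exp_mul_eval α (lexPairs r) 1
  simp only [map_one, mul_one] at hconj
  rw [hconj, foldr_eulerTwist_sub_one, prod_map_lexPairs, touchardTransform_prod_X_sub_X]
  funext t
  simp [map_prod]

/-- Applying the pairwise-difference operators `(D_i − D_j)` (where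
`D_i = t_i·∂/∂t_i`), composed in lexicographic order over all pairs `i < j`,
to `F(t) = exp(∑ α_i t_i)` yields
`exp(∑ α_i t_i) · ∏_{i<j} (α_i t_i − α_j t_j)`. -/
theorem antisym_derivation (r : ℕ) (hr : 1 ≤ r) (α : Fin r → ℂ) :
    (lexPairs r).foldr
        (fun p h => fun t => thetaOp r p.1 h t - thetaOp r p.2 h t)
        (fun t : Fin r → ℂ => Complex.exp (∑ i : Fin r, α i * t i)) =
      fun t : Fin r → ℂ =>
        Complex.exp (∑ i : Fin r, α i * t i) *
          ∏ p ∈ Finset.univ.filter (fun p : Fin r × Fin r => p.1 < p.2),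
            (α p.1 * t p.1 - α p.2 * t p.2) :=
  antisym_derivation_general r α
end
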